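/- arXiv:2305.18861 — 11 statements merged into one kernel-verified Lean document; each statement's English description precedes it below -/
import Mathlib

section
/- For any weight matrix P ∈ ℝ_{>0}^{m×n} and transformation matrix G ∈ ℝ_{>0}^{m×n}: if there exist parameter vectors w, w' ∈ ℝ_{>0}^m and values ℓ, ℓ' such that ℓ_i(P,G,w) = ℓ for all i ∈ [m] and ℓ_i(P,G,w') = ℓ' for all i ∈ [m], then ℓ = ℓ'. -/
open Finset

/-- GP-allocation: fraction of item `j` assigned to agent `i`. -/
noncomputable def gpAlloc {m n : ℕ} (G : Fin m → Fin n → ℝ) (w : Fin m → ℝ)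
    (i : Fin m) (j : Fin n) : ℝ :=
  G i j * w i / ∑ i', G i' j * w i'

/-- Load of agent `i` under the GP-allocation. -/
noncomputable def gpLoad {m n : ℕ} (P G : Fin m → Fin n → ℝ) (w : Fin m → ℝ)
    (i : Fin m) : ℝ :=
  ∑ j, gpAlloc G w i j * P i j

lemma gp_load_le {m n : ℕ} (hm : 0 < m) (P G : Fin m → Fin n → ℝ)
    (hP : ∀ i j, 0 < P i j) (hG : ∀ i j, 0 < G i j)
    (w w' : Fin m → ℝ) (hw : ∀ i, 0 < w i) (hw' : ∀ i, 0 < w' i)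
    (l l' : ℝ)
    (hl : ∀ i, gpLoad P G w i = l) (hl' : ∀ i, gpLoad P G w' i = l') :
    l ≤ l' := by
  have hne : Nonempty (Fin m) := ⟨⟨0, hm⟩⟩
  obtain ⟨i0, hmax⟩ := Finite.exists_max (fun i => w' i / w i)
  rw [← hl i0, ← hl' i0]
  unfold gpLoad
  refine Finset.sum_le_sum fun j _ => ?_
  refine mul_le_mul_of_nonneg_right ?_ (hP i0 j).le
  unfold gpAlloc
  have hB : 0 < ∑ i', G i' j * w i' :=
    Finset.sum_pos (fun i _ => mul_pos (hG i j) (hw i)) ⟨i0, mem_univ _⟩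
  have hB' : 0 < ∑ i', G i' j * w' i' :=
    Finset.sum_pos (fun i _ => mul_pos (hG i j) (hw' i)) ⟨i0, mem_univ _⟩
  rw [div_le_div_iff₀ hB hB', Finset.mul_sum, Finset.mul_sum]
  refine Finset.sum_le_sum fun i _ => ?_
  have hr : w' i * w i0 ≤ w' i0 * w i := by
    have := hmax i
    rw [div_le_div_iff₀ (hw i) (hw i0)] at this
    linarith
  nlinarith [mul_nonneg (mul_nonneg (hG i0 j).le (hG i j).le) (sub_nonneg.mpr hr)]

theorem stmt2 {m n : ℕ} (hm : 0 < m) (P G : Fin m → Fin n → ℝ)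
    (hP : ∀ i j, 0 < P i j) (hG : ∀ i j, 0 < G i j)
    (w w' : Fin m → ℝ) (hw : ∀ i, 0 < w i) (hw' : ∀ i, 0 < w' i)
    (l l' : ℝ)
    (hl : ∀ i, gpLoad P G w i = l) (hl' : ∀ i, gpLoad P G w' i = l') :
    l = l' := by
  exact le_antisymm
    (gp_load_le hm P G hP hG w w' hw hw' l l' hl hl')
    (gp_load_le hm P G hP hG w' w hw' hw l' l hl' hl)
end

section
/- Let P, G ∈ ℝ_{>0}^{m×n} and γ > 0. Let w ∈ ℝ_{>0}^m, set ℓ_i = ℓ_i(P,G,w) for all i, define w'_i = γ·w_i/ℓ_i and ℓ'_i = ℓ_i(P,G,w'), and let p̃_i = Σ_{j=1}^n p_{i,j}. Writing ℓ_min = min_{i∈[m]} ℓ_i and ℓ_max = max_{i∈[m]} ℓ_i, we have for every i ∈ [m]: ℓ'_i ≥ ℓ_min / (1 − (ℓ_i − ℓ_min)/p̃_i) and ℓ'_i ≤ ℓ_max / (1 + (ℓ_max − ℓ_i)/p̃_i). -/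
open Finset

/-!
Dividing every weight by the current load moves agent `i`'s share `x` of an item to at least
`reweight ℓᵢ ℓ_min x` and at most `reweight ℓᵢ ℓ_max x`, since every other weight is divided by
a number in `[ℓ_min, ℓ_max]`. On `[0, 1]`, `reweight a b` is convex when `b ≤ a` and concave when
`a ≤ b`, so Jensen's inequality with the weights `p_{i,j}` (mean point `ℓᵢ / p̃ᵢ`, applied via
the tangent line there) turns these pointwise bounds into the bounds on `ℓ'ᵢ`.
-/

/-- The share `x` of an item once its holder's weight is divided by `a` and every other
weight by `b`: `(x / a) / (x / a + (1 - x) / b)`. -/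
noncomputable def reweight (a b x : ℝ) : ℝ := b * x / (b * x + a * (1 - x))

section Reweight

variable {a b p x x₀ : ℝ}

lemma reweight_denom_pos (ha : 0 < a) (hb : 0 < b) (hx : x ∈ Set.Icc 0 1) :
    0 < b * x + a * (1 - x) := by
  rcases hx.1.eq_or_lt with rfl | hx0
  · simpa using ha
  · nlinarith [mul_pos hb hx0, mul_nonneg ha.le (sub_nonneg.2 hx.2)]

lemma reweight_sub_tangent (ha : 0 < a) (hb : 0 < b) (hx : x ∈ Set.Icc 0 1)
    (hx₀ : x₀ ∈ Set.Icc 0 1) :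
    reweight a b x - (reweight a b x₀ + a * b / (b * x₀ + a * (1 - x₀)) ^ 2 * (x - x₀)) =
      a * b * (a - b) * (x - x₀) ^ 2 /
        ((b * x + a * (1 - x)) * (b * x₀ + a * (1 - x₀)) ^ 2) := by
  have hd := (reweight_denom_pos ha hb hx).ne'
  have he := (reweight_denom_pos ha hb hx₀).ne'
  unfold reweight
  field_simp
  ring

lemma tangent_le_reweight (hb : 0 < b) (hba : b ≤ a) (hx : x ∈ Set.Icc 0 1)
    (hx₀ : x₀ ∈ Set.Icc 0 1) :
    reweight a b x₀ + a * b / (b * x₀ + a * (1 - x₀)) ^ 2 * (x - x₀) ≤ reweight a b x := by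
  have ha := hb.trans_le hba
  rw [← sub_nonneg, reweight_sub_tangent ha hb hx hx₀]
  have := reweight_denom_pos ha hb hx
  have := sub_nonneg.2 hba
  positivity

lemma reweight_le_tangent (ha : 0 < a) (hab : a ≤ b) (hx : x ∈ Set.Icc 0 1)
    (hx₀ : x₀ ∈ Set.Icc 0 1) :
    reweight a b x ≤ reweight a b x₀ + a * b / (b * x₀ + a * (1 - x₀)) ^ 2 * (x - x₀) := by
  have hb := ha.trans_le hab
  rw [← sub_nonpos, reweight_sub_tangent ha hb hx hx₀]
  have hnum : a * b * (a - b) * (x - x₀) ^ 2 ≤ 0 :=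
    mul_nonpos_of_nonpos_of_nonneg
      (mul_nonpos_of_nonneg_of_nonpos (by positivity) (sub_nonpos.2 hab)) (sq_nonneg _)
  have := reweight_denom_pos ha hb hx
  have := reweight_denom_pos ha hb hx₀
  exact div_nonpos_of_nonpos_of_nonneg hnum (by positivity)

lemma mul_reweight_div (hb : 0 < b) (ha : 0 < a) (hap : a ≤ p) :
    p * reweight a b (a / p) = b / (1 - (a - b) / p) := by
  have hp := ha.trans_le hap
  have : p - a + b ≠ 0 := by linarith
  unfold reweight
  field_simp
  ring

end Reweight

section Jensen

variable {ι : Type*} {s : Finset ι} {q x : ι → ℝ} {a b : ℝ}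

lemma sum_tangent_mul (hp : ∑ j ∈ s, q j ≠ 0) (hxq : ∑ j ∈ s, x j * q j = a) (c β : ℝ) :
    ∑ j ∈ s, (c + β * (x j - a / ∑ j ∈ s, q j)) * q j = (∑ j ∈ s, q j) * c := by
  have : ∑ j ∈ s, (c + β * (x j - a / ∑ j ∈ s, q j)) * q j =
      (c - β * (a / ∑ j ∈ s, q j)) * ∑ j ∈ s, q j + β * ∑ j ∈ s, x j * q j := by
    rw [mul_sum, mul_sum, ← sum_add_distrib]
    exact sum_congr rfl fun j _ => by ring
  rw [this, hxq]
  field_simp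
  ring

lemma div_one_sub_le_sum_reweight_mul (hq : ∀ j ∈ s, 0 ≤ q j)
    (hx : ∀ j ∈ s, x j ∈ Set.Icc 0 1) (hb : 0 < b) (hba : b ≤ a) (hap : a ≤ ∑ j ∈ s, q j)
    (hxq : ∑ j ∈ s, x j * q j = a) :
    b / (1 - (a - b) / ∑ j ∈ s, q j) ≤ ∑ j ∈ s, reweight a b (x j) * q j := by
  have ha := hb.trans_le hba
  have hp := ha.trans_le hap
  have hx₀ : a / ∑ j ∈ s, q j ∈ Set.Icc 0 1 := ⟨by positivity, (div_le_one hp).2 hap⟩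
  rw [← mul_reweight_div hb ha hap, ← sum_tangent_mul hp.ne' hxq]
  exact sum_le_sum fun j hj =>
    mul_le_mul_of_nonneg_right (tangent_le_reweight hb hba (hx j hj) hx₀) (hq j hj)

lemma sum_reweight_mul_le_div_one_sub (hq : ∀ j ∈ s, 0 ≤ q j)
    (hx : ∀ j ∈ s, x j ∈ Set.Icc 0 1) (ha : 0 < a) (hab : a ≤ b) (hap : a ≤ ∑ j ∈ s, q j)
    (hxq : ∑ j ∈ s, x j * q j = a) :
    ∑ j ∈ s, reweight a b (x j) * q j ≤ b / (1 - (a - b) / ∑ j ∈ s, q j) := by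
  have hb := ha.trans_le hab
  have hp := ha.trans_le hap
  have hx₀ : a / ∑ j ∈ s, q j ∈ Set.Icc 0 1 := ⟨by positivity, (div_le_one hp).2 hap⟩
  rw [← mul_reweight_div hb ha hap, ← sum_tangent_mul hp.ne' hxq]
  exact sum_le_sum fun j hj =>
    mul_le_mul_of_nonneg_right (reweight_le_tangent ha hab (hx j hj) hx₀) (hq j hj)

end Jensen

section Share

variable {ι : Type*} [Fintype ι] {u r : ι → ℝ} {b : ℝ}

lemma reweight_div_sum_eq (i : ι) (hu : ∀ k, 0 < u k) (hri : 0 < r i) (hb : 0 < b) :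
    reweight (r i) b (u i / ∑ k, u k) = u i / r i / (u i / r i + (∑ k, u k - u i) / b) := by
  have hS : 0 < ∑ k, u k := sum_pos (fun k _ => hu k) ⟨i, mem_univ i⟩
  unfold reweight
  field_simp

lemma reweight_le_div_sum_div (hu : ∀ k, 0 < u k) (hb : 0 < b) (hbr : ∀ k, b ≤ r k) (i : ι) :
    reweight (r i) b (u i / ∑ k, u k) ≤ u i / r i / ∑ k, u k / r k := by
  have hr k : 0 < r k := hb.trans_le (hbr k)
  have hgap : u i / b - u i / r i ≤ ∑ k, (u k / b - u k / r k) :=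
    single_le_sum (f := fun k => u k / b - u k / r k)
      (fun k _ => sub_nonneg.2 (div_le_div_of_nonneg_left (hu k).le hb (hbr k))) (mem_univ i)
  rw [sum_sub_distrib, ← sum_div] at hgap
  rw [reweight_div_sum_eq i hu (hr i) hb]
  exact div_le_div_of_nonneg_left (div_pos (hu i) (hr i)).le
    (sum_pos (fun k _ => div_pos (hu k) (hr k)) ⟨i, mem_univ i⟩)
    (by linarith [div_sub_div_same (∑ k, u k) (u i) b])

lemma div_sum_div_le_reweight (hu : ∀ k, 0 < u k) (hr : ∀ k, 0 < r k) (hrb : ∀ k, r k ≤ b)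
    (i : ι) : u i / r i / ∑ k, u k / r k ≤ reweight (r i) b (u i / ∑ k, u k) := by
  have hb : 0 < b := (hr i).trans_le (hrb i)
  have hgap : u i / r i - u i / b ≤ ∑ k, (u k / r k - u k / b) :=
    single_le_sum (f := fun k => u k / r k - u k / b)
      (fun k _ => sub_nonneg.2 (div_le_div_of_nonneg_left (hu k).le (hr k) (hrb k))) (mem_univ i)
  rw [sum_sub_distrib, ← sum_div] at hgap
  rw [reweight_div_sum_eq i hu (hr i) hb]
  exact div_le_div_of_nonneg_left (div_pos (hu i) (hr i)).le
    (add_pos_of_pos_of_nonneg (div_pos (hu i) (hr i))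
      (div_nonneg (sub_nonneg.2 (single_le_sum (fun k _ => (hu k).le) (mem_univ i))) hb.le))
    (by linarith [div_sub_div_same (∑ k, u k) (u i) b])

end Share

section GP

variable {m n : ℕ} {P G : Fin m → Fin n → ℝ} {w r : Fin m → ℝ} {γ b : ℝ}

lemma gpAlloc_rescale (hγ : γ ≠ 0) (i : Fin m) (j : Fin n) :
    gpAlloc G (fun k => γ * w k / r k) i j = G i j * w i / r i / ∑ k, G k j * w k / r k := by
  have h k : G k j * (γ * w k / r k) = γ * (G k j * w k / r k) := by ring
  simp only [gpAlloc, h, ← mul_sum]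
  exact mul_div_mul_left _ _ hγ

lemma gpAlloc_mem_Icc (hG : ∀ i j, 0 < G i j) (hw : ∀ i, 0 < w i) (i : Fin m) (j : Fin n) :
    gpAlloc G w i j ∈ Set.Icc 0 1 := by
  have hu k : 0 < G k j * w k := mul_pos (hG k j) (hw k)
  exact ⟨div_nonneg (hu i).le (sum_nonneg fun k _ => (hu k).le),
    div_le_one_of_le₀ (single_le_sum (fun k _ => (hu k).le) (mem_univ i))
      (sum_nonneg fun k _ => (hu k).le)⟩

lemma gpLoad_pos [Nonempty (Fin n)] (hP : ∀ i j, 0 < P i j) (hG : ∀ i j, 0 < G i j)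
    (hw : ∀ i, 0 < w i) (i : Fin m) : 0 < gpLoad P G w i :=
  sum_pos (fun j _ => mul_pos (div_pos (mul_pos (hG i j) (hw i))
    (sum_pos (fun k _ => mul_pos (hG k j) (hw k)) ⟨i, mem_univ i⟩)) (hP i j)) univ_nonempty

lemma gpLoad_le_sum (hP : ∀ i j, 0 ≤ P i j) (hG : ∀ i j, 0 < G i j) (hw : ∀ i, 0 < w i)
    (i : Fin m) : gpLoad P G w i ≤ ∑ j, P i j :=
  sum_le_sum fun j _ => mul_le_of_le_one_left (hP i j) (gpAlloc_mem_Icc hG hw i j).2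

lemma div_one_sub_le_gpLoad_rescale (hP : ∀ i j, 0 ≤ P i j) (hG : ∀ i j, 0 < G i j)
    (hw : ∀ i, 0 < w i) (hγ : γ ≠ 0) (hb : 0 < b) (hbr : ∀ k, b ≤ r k) (i : Fin m)
    (hri : r i = gpLoad P G w i) :
    b / (1 - (r i - b) / ∑ j, P i j) ≤ gpLoad P G (fun k => γ * w k / r k) i := by
  refine (div_one_sub_le_sum_reweight_mul (fun j _ => hP i j)
    (fun j _ => gpAlloc_mem_Icc hG hw i j) hb (hbr i) (hri ▸ gpLoad_le_sum hP hG hw i)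
    hri.symm).trans (sum_le_sum fun j _ => mul_le_mul_of_nonneg_right ?_ (hP i j))
  rw [gpAlloc_rescale hγ]
  exact reweight_le_div_sum_div (u := fun k => G k j * w k)
    (fun k => mul_pos (hG k j) (hw k)) hb hbr i

lemma gpLoad_rescale_le_div_one_sub (hP : ∀ i j, 0 ≤ P i j) (hG : ∀ i j, 0 < G i j)
    (hw : ∀ i, 0 < w i) (hγ : γ ≠ 0) (hr : ∀ k, 0 < r k) (hrb : ∀ k, r k ≤ b) (i : Fin m)
    (hri : r i = gpLoad P G w i) :
    gpLoad P G (fun k => γ * w k / r k) i ≤ b / (1 - (r i - b) / ∑ j, P i j) := by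
  refine (sum_le_sum fun j _ => mul_le_mul_of_nonneg_right ?_ (hP i j)).trans
    (sum_reweight_mul_le_div_one_sub (fun j _ => hP i j) (fun j _ => gpAlloc_mem_Icc hG hw i j)
      (hr i) (hrb i) (hri ▸ gpLoad_le_sum hP hG hw i) hri.symm)
  rw [gpAlloc_rescale hγ]
  exact div_sum_div_le_reweight (u := fun k => G k j * w k)
    (fun k => mul_pos (hG k j) (hw k)) hr hrb i

end GP

theorem stmt3_general {m n : ℕ} (P G : Fin m → Fin n → ℝ)
    (hP : ∀ i j, 0 < P i j) (hG : ∀ i j, 0 < G i j)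
    (γ : ℝ) (hγ : 0 < γ) (w : Fin m → ℝ) (hw : ∀ i, 0 < w i)
    (ℓ ℓ' : Fin m → ℝ)
    (hℓ : ∀ i, ℓ i = gpLoad P G w i)
    (hℓ' : ∀ i, ℓ' i = gpLoad P G (fun i => γ * w i / ℓ i) i)
    (ptil : Fin m → ℝ) (hptil : ∀ i, ptil i = ∑ j, P i j) :
    ∀ i, (⨅ k, ℓ k) / (1 - (ℓ i - ⨅ k, ℓ k) / ptil i) ≤ ℓ' i ∧
      ℓ' i ≤ (⨆ k, ℓ k) / (1 + ((⨆ k, ℓ k) - ℓ i) / ptil i) := by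
  intro i
  rcases isEmpty_or_nonempty (Fin n) with hn | hn
  · simp [hℓ', hℓ, gpLoad]
  have : Nonempty (Fin m) := ⟨i⟩
  have hℓpos k : 0 < ℓ k := hℓ k ▸ gpLoad_pos hP hG hw k
  obtain ⟨kmin, hkmin⟩ := exists_eq_ciInf_of_finite (f := ℓ)
  obtain ⟨kmax, hkmax⟩ := exists_eq_ciSup_of_finite (f := ℓ)
  have hmin k : ℓ kmin ≤ ℓ k := hkmin ▸ Finite.ciInf_le ℓ k
  have hmax k : ℓ k ≤ ℓ kmax := hkmax ▸ Finite.le_ciSup ℓ k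
  have hP' i j : 0 ≤ P i j := (hP i j).le
  rw [← hkmin, ← hkmax, hℓ' i, hptil i, ← sub_neg_eq_add, ← neg_div, neg_sub]
  exact ⟨div_one_sub_le_gpLoad_rescale hP' hG hw hγ.ne' (hℓpos kmin) hmin i (hℓ i),
    gpLoad_rescale_le_div_one_sub hP' hG hw hγ.ne' hℓpos hmax i (hℓ i)⟩

theorem stmt3 {m n : ℕ} (hm : 0 < m) (P G : Fin m → Fin n → ℝ)
    (hP : ∀ i j, 0 < P i j) (hG : ∀ i j, 0 < G i j)
    (γ : ℝ) (hγ : 0 < γ) (w : Fin m → ℝ) (hw : ∀ i, 0 < w i)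
    (ℓ ℓ' : Fin m → ℝ)
    (hℓ : ∀ i, ℓ i = gpLoad P G w i)
    (hℓ' : ∀ i, ℓ' i = gpLoad P G (fun i => γ * w i / ℓ i) i)
    (ptil : Fin m → ℝ) (hptil : ∀ i, ptil i = ∑ j, P i j) :
    ∀ i, (⨅ k, ℓ k) / (1 - (ℓ i - ⨅ k, ℓ k) / ptil i) ≤ ℓ' i ∧
      ℓ' i ≤ (⨆ k, ℓ k) / (1 + ((⨆ k, ℓ k) - ℓ i) / ptil i) :=
  stmt3_general P G hP hG γ hγ w hw ℓ ℓ' hℓ hℓ' ptil hptil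
end

section
/- Let P, G ∈ ℝ_{>0}^{m×n} be fixed matrices and consider the iterates w^{(r)} of the iterative weight-update algorithm. There exists a constant x_min > 0, depending only on P and G, such that for every iteration r ≥ 0 and every i ∈ [m], j ∈ [n], x_{i,j}(G, w^{(r)}) ≥ x_min. -/
open Finset

lemma gp_denom_pos {m n : ℕ} (hm : 0 < m) (G : Fin m → Fin n → ℝ) (w : Fin m → ℝ)
    (hG : ∀ i j, 0 < G i j) (hw : ∀ i, 0 < w i) (j : Fin n) :
    0 < ∑ i', G i' j * w i' := by
  apply Finset.sum_pos (fun i _ => mul_pos (hG i j) (hw i))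
  exact ⟨⟨0, hm⟩, Finset.mem_univ _⟩

lemma gp_alloc_pos {m n : ℕ} (hm : 0 < m) (G : Fin m → Fin n → ℝ) (w : Fin m → ℝ)
    (hG : ∀ i j, 0 < G i j) (hw : ∀ i, 0 < w i) (i : Fin m) (j : Fin n) :
    0 < gpAlloc G w i j :=
  div_pos (mul_pos (hG i j) (hw i)) (gp_denom_pos hm G w hG hw j)

lemma gp_load_pos {m n : ℕ} (hm : 0 < m) (hn : 0 < n) (P G : Fin m → Fin n → ℝ)
    (hP : ∀ i j, 0 < P i j) (hG : ∀ i j, 0 < G i j) (w : Fin m → ℝ)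
    (hw : ∀ i, 0 < w i) (i : Fin m) : 0 < gpLoad P G w i := by
  apply Finset.sum_pos
    (fun j _ => mul_pos (gp_alloc_pos hm G w hG hw i j) (hP i j))
  exact ⟨⟨0, hn⟩, Finset.mem_univ _⟩

theorem stmt4 {m n : ℕ} (hm : 0 < m) (P G : Fin m → Fin n → ℝ)
    (hP : ∀ i j, 0 < P i j) (hG : ∀ i j, 0 < G i j)
    (W : ℕ → Fin m → ℝ)
    (hW0 : ∀ i, W 0 i = 1)
    (hWrec : ∀ r i, W (r + 1) i =
      W r i * gpLoad P G (W r) ⟨0, hm⟩ / gpLoad P G (W r) i) :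
    ∃ xmin : ℝ, 0 < xmin ∧ ∀ (r : ℕ) (i : Fin m) (j : Fin n),
      xmin ≤ gpAlloc G (W r) i j := by
  rcases Nat.eq_zero_or_pos n with hn | hn
  · subst hn
    exact ⟨1, one_pos, fun r i j => j.elim0⟩
  set i0 : Fin m := ⟨0, hm⟩ with hi0
  have j0 : Fin n := ⟨0, hn⟩
  -- the key constants
  obtain ⟨S, hSdef⟩ : ∃ x : ℝ,
      x = ∑ p : Fin m × Fin n, G i0 p.2 * P i0 p.2 / (G p.1 p.2 * P p.1 p.2) := ⟨_, rfl⟩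
  obtain ⟨T, hTdef⟩ : ∃ x : ℝ,
      x = ∑ p : Fin m × Fin n, G p.1 p.2 * P p.1 p.2 / (G i0 p.2 * P i0 p.2) := ⟨_, rfl⟩
  obtain ⟨Gsum, hGsumdef⟩ : ∃ x : ℝ, x = ∑ p : Fin m × Fin n, G p.1 p.2 := ⟨_, rfl⟩
  obtain ⟨ginv, hginvdef⟩ : ∃ x : ℝ, x = ∑ p : Fin m × Fin n, (G p.1 p.2)⁻¹ := ⟨_, rfl⟩
  have hGPpos : ∀ i (j : Fin n), 0 < G i j * P i j := fun i j => mul_pos (hG i j) (hP i j)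
  have hSpos : 0 < S := by
    rw [hSdef]
    apply Finset.sum_pos (fun p _ => div_pos (hGPpos i0 p.2) (hGPpos p.1 p.2))
    exact ⟨(i0, j0), Finset.mem_univ _⟩
  have hTpos : 0 < T := by
    rw [hTdef]
    apply Finset.sum_pos (fun p _ => div_pos (hGPpos p.1 p.2) (hGPpos i0 p.2))
    exact ⟨(i0, j0), Finset.mem_univ _⟩
  have hSkey : ∀ i (j : Fin n), G i0 j * P i0 j ≤ S * (G i j * P i j) := by
    intro i j
    have h := Finset.single_le_sum
      (f := fun p : Fin m × Fin n => G i0 p.2 * P i0 p.2 / (G p.1 p.2 * P p.1 p.2))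
      (fun p _ => le_of_lt (div_pos (hGPpos i0 p.2) (hGPpos p.1 p.2)))
      (Finset.mem_univ (i, j))
    rw [← hSdef] at h
    calc G i0 j * P i0 j
        = (G i0 j * P i0 j / (G i j * P i j)) * (G i j * P i j) := by
          rw [div_mul_cancel₀ _ (ne_of_gt (hGPpos i j))]
      _ ≤ S * (G i j * P i j) :=
          mul_le_mul_of_nonneg_right h (le_of_lt (hGPpos i j))
  have hTkey : ∀ i (j : Fin n), G i j * P i j ≤ T * (G i0 j * P i0 j) := by
    intro i j
    have h := Finset.single_le_sum
      (f := fun p : Fin m × Fin n => G p.1 p.2 * P p.1 p.2 / (G i0 p.2 * P i0 p.2))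
      (fun p _ => le_of_lt (div_pos (hGPpos p.1 p.2) (hGPpos i0 p.2)))
      (Finset.mem_univ (i, j))
    rw [← hTdef] at h
    calc G i j * P i j
        = (G i j * P i j / (G i0 j * P i0 j)) * (G i0 j * P i0 j) := by
          rw [div_mul_cancel₀ _ (ne_of_gt (hGPpos i0 j))]
      _ ≤ T * (G i0 j * P i0 j) :=
          mul_le_mul_of_nonneg_right h (le_of_lt (hGPpos i0 j))
  have hS1 : 1 ≤ S := by
    have h := Finset.single_le_sum
      (f := fun p : Fin m × Fin n => G i0 p.2 * P i0 p.2 / (G p.1 p.2 * P p.1 p.2))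
      (fun p _ => le_of_lt (div_pos (hGPpos i0 p.2) (hGPpos p.1 p.2)))
      (Finset.mem_univ (i0, j0))
    rw [← hSdef] at h
    have h' : G i0 j0 * P i0 j0 / (G i0 j0 * P i0 j0) ≤ S := h
    rwa [div_self (ne_of_gt (hGPpos i0 j0))] at h'
  have hT1 : 1 ≤ T := by
    have h := Finset.single_le_sum
      (f := fun p : Fin m × Fin n => G p.1 p.2 * P p.1 p.2 / (G i0 p.2 * P i0 p.2))
      (fun p _ => le_of_lt (div_pos (hGPpos p.1 p.2) (hGPpos i0 p.2)))
      (Finset.mem_univ (i0, j0))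
    rw [← hTdef] at h
    have h' : G i0 j0 * P i0 j0 / (G i0 j0 * P i0 j0) ≤ T := h
    rwa [div_self (ne_of_gt (hGPpos i0 j0))] at h'
  -- positivity of weights
  have hWpos : ∀ r i, 0 < W r i := by
    intro r
    induction r with
    | zero => intro i; rw [hW0]; exact one_pos
    | succ r ih =>
        intro i
        rw [hWrec]
        have h1 := gp_load_pos hm hn P G hP hG (W r) ih i0
        have h2 := gp_load_pos hm hn P G hP hG (W r) ih i
        exact div_pos (mul_pos (ih i) h1) h2
  have hLpos : ∀ r i, 0 < gpLoad P G (W r) i :=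
    fun r i => gp_load_pos hm hn P G hP hG (W r) (hWpos r) i
  -- weight of agent 0 is always 1
  have hW1 : ∀ r, W r i0 = 1 := by
    intro r
    induction r with
    | zero => exact hW0 i0
    | succ r ih =>
        rw [hWrec, ih, one_mul, div_self (ne_of_gt (hLpos r i0))]
  -- the key load comparison
  have hup : ∀ r i, gpLoad P G (W r) i0 * W r i ≤ S * gpLoad P G (W r) i := by
    intro r i
    have hD : ∀ j : Fin n, 0 < ∑ i', G i' j * W r i' :=
      gp_denom_pos hm G (W r) hG (hWpos r)
    unfold gpLoad gpAlloc
    rw [Finset.sum_mul, Finset.mul_sum]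
    apply Finset.sum_le_sum
    intro j _
    calc G i0 j * W r i0 / (∑ i', G i' j * W r i') * P i0 j * W r i
        = (G i0 j * P i0 j) * (W r i0 * W r i / (∑ i', G i' j * W r i')) := by
          ring
      _ ≤ (S * (G i j * P i j)) * (W r i0 * W r i / (∑ i', G i' j * W r i')) := by
          exact mul_le_mul_of_nonneg_right (hSkey i j)
            (le_of_lt (div_pos (mul_pos (hWpos r i0) (hWpos r i)) (hD j)))
      _ = S * (G i j * W r i / (∑ i', G i' j * W r i') * P i j * W r i0) := by
          ring
      _ = S * (G i j * W r i / (∑ i', G i' j * W r i') * P i j) := by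
          rw [hW1 r, mul_one]
  have hlo : ∀ r i, gpLoad P G (W r) i ≤ T * (gpLoad P G (W r) i0 * W r i) := by
    intro r i
    have hD : ∀ j : Fin n, 0 < ∑ i', G i' j * W r i' :=
      gp_denom_pos hm G (W r) hG (hWpos r)
    unfold gpLoad gpAlloc
    rw [Finset.sum_mul, Finset.mul_sum]
    apply Finset.sum_le_sum
    intro j _
    calc G i j * W r i / (∑ i', G i' j * W r i') * P i j
        = (G i j * P i j) * (W r i / (∑ i', G i' j * W r i')) := by ring
      _ = (G i j * P i j) * (W r i0 * W r i / (∑ i', G i' j * W r i')) := by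
          rw [hW1 r, one_mul]
      _ ≤ (T * (G i0 j * P i0 j)) * (W r i0 * W r i / (∑ i', G i' j * W r i')) := by
          exact mul_le_mul_of_nonneg_right (hTkey i j)
            (le_of_lt (div_pos (mul_pos (hWpos r i0) (hWpos r i)) (hD j)))
      _ = T * (G i0 j * W r i0 / (∑ i', G i' j * W r i') * P i0 j * W r i) := by
          ring
  -- bounds on the weights
  have hWbound : ∀ r i, T⁻¹ ≤ W r i ∧ W r i ≤ S := by
    intro r
    induction r with
    | zero =>
        intro i
        rw [hW0]
        constructor
        · rw [inv_le_one_iff₀]; right; exact hT1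
        · exact hS1
    | succ r ih =>
        intro i
        rw [hWrec]
        have hLi := hLpos r i
        have hL0 := hLpos r i0
        constructor
        · rw [le_div_iff₀ hLi]
          have h := hlo r i
          have h2 := mul_le_mul_of_nonneg_left h (le_of_lt (inv_pos.mpr hTpos))
          rw [← mul_assoc, inv_mul_cancel₀ (ne_of_gt hTpos), one_mul] at h2
          calc T⁻¹ * gpLoad P G (W r) i ≤ gpLoad P G (W r) i0 * W r i := h2
            _ = W r i * gpLoad P G (W r) i0 := mul_comm _ _
        · rw [div_le_iff₀ hLi]
          calc W r i * gpLoad P G (W r) i0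
              = gpLoad P G (W r) i0 * W r i := mul_comm _ _
            _ ≤ S * gpLoad P G (W r) i := hup r i
  -- final constants
  have hginvpos : 0 < ginv := by
    rw [hginvdef]
    apply Finset.sum_pos (fun p _ => inv_pos.mpr (hG p.1 p.2))
    exact ⟨(i0, j0), Finset.mem_univ _⟩
  have hGsumpos : 0 < Gsum := by
    rw [hGsumdef]
    apply Finset.sum_pos (fun p _ => hG p.1 p.2)
    exact ⟨(i0, j0), Finset.mem_univ _⟩
  have hGlow : ∀ i (j : Fin n), ginv⁻¹ ≤ G i j := by
    intro i j
    have h := Finset.single_le_sum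
      (f := fun p : Fin m × Fin n => (G p.1 p.2)⁻¹)
      (fun p _ => le_of_lt (inv_pos.mpr (hG p.1 p.2)))
      (Finset.mem_univ (i, j))
    rw [← hginvdef] at h
    calc ginv⁻¹ ≤ ((G i j)⁻¹)⁻¹ :=
          inv_anti₀ (inv_pos.mpr (hG i j)) h
      _ = G i j := inv_inv _
  have hGhigh : ∀ (j : Fin n), ∑ i', G i' j ≤ Gsum := by
    intro j
    rw [hGsumdef, Fintype.sum_prod_type]
    apply Finset.sum_le_sum
    intro i _
    exact Finset.single_le_sum (f := fun j' => G i j')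
      (fun j' _ => le_of_lt (hG i j')) (Finset.mem_univ j)
  refine ⟨ginv⁻¹ * T⁻¹ / (Gsum * S), div_pos (mul_pos (inv_pos.mpr hginvpos) (inv_pos.mpr hTpos)) (mul_pos hGsumpos hSpos), ?_⟩
  intro r i j
  unfold gpAlloc
  have hD : (0 : ℝ) < ∑ i', G i' j * W r i' := gp_denom_pos hm G (W r) hG (hWpos r) j
  apply div_le_div₀ (le_of_lt (mul_pos (hG i j) (hWpos r i)))
  · exact mul_le_mul (hGlow i j) ((hWbound r i).1) (le_of_lt (inv_pos.mpr hTpos))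
      (le_of_lt (hG i j))
  · exact hD
  · calc (∑ i', G i' j * W r i')
        ≤ ∑ i', G i' j * S := by
          apply Finset.sum_le_sum
          intro i' _
          exact mul_le_mul_of_nonneg_left ((hWbound r i').2) (le_of_lt (hG i' j))
      _ = (∑ i', G i' j) * S := by rw [Finset.sum_mul]
      _ ≤ Gsum * S := mul_le_mul_of_nonneg_right (hGhigh j) (le_of_lt hSpos)
end

section
/- Fix a weight matrix P ∈ ℝ_{>0}^{m×n} and let α, α' ∈ ℝ with α > α'. Then for any two parameter vectors w_α, w_{α'} ∈ ℝ_{>0}^m, there exists an agent k ∈ [m] such that ℓ_k(P,α,w_α) ≥ ℓ_k(P,α',w_{α'}). -/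
open Finset

/-- EP-allocation with exponent `α`: fraction of item `j` assigned to agent `i`. -/
noncomputable def epAlloc {m n : ℕ} (P : Fin m → Fin n → ℝ) (α : ℝ) (w : Fin m → ℝ)
    (i : Fin m) (j : Fin n) : ℝ :=
  P i j ^ α * w i / ∑ i', P i' j ^ α * w i'

/-- Load of agent `i` under the EP-allocation with exponent `α`. -/
noncomputable def epLoad {m n : ℕ} (P : Fin m → Fin n → ℝ) (α : ℝ) (w : Fin m → ℝ)
    (i : Fin m) : ℝ :=
  ∑ j, epAlloc P α w i j * P i j

theorem stmt8 {m n : ℕ} (hm : 0 < m) (P : Fin m → Fin n → ℝ)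
    (hP : ∀ i j, 0 < P i j)
    (α α' : ℝ) (hαα' : α' < α)
    (wα wα' : Fin m → ℝ) (hwα : ∀ i, 0 < wα i) (hwα' : ∀ i, 0 < wα' i) :
    ∃ k : Fin m, epLoad P α' wα' k ≤ epLoad P α wα k := by
  classical
  have hne : Nonempty (Fin m) := Fin.pos_iff_nonempty.1 hm
  by_contra hcon
  push_neg at hcon
  set β : ℝ := α - α' with hβdef
  have hβ : 0 < β := sub_pos.2 hαα'
  set γ : Fin m → ℝ := fun i => (wα i / wα' i) ^ (1/β) with hγdef
  have hγ : ∀ i, 0 < γ i := fun i =>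
    Real.rpow_pos_of_pos (div_pos (hwα i) (hwα' i)) _
  set S : Fin n → ℝ := fun j => ∑ i', P i' j ^ α * wα i' with hSdef
  set S' : Fin n → ℝ := fun j => ∑ i', P i' j ^ α' * wα' i' with hS'def
  have hS : ∀ j, 0 < S j := fun j =>
    Finset.sum_pos (fun i _ => mul_pos (Real.rpow_pos_of_pos (hP i j) α) (hwα i))
      Finset.univ_nonempty
  have hS' : ∀ j, 0 < S' j := fun j =>
    Finset.sum_pos (fun i _ => mul_pos (Real.rpow_pos_of_pos (hP i j) α') (hwα' i))
      Finset.univ_nonempty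
  set t : Fin n → ℝ := fun j => (S j / S' j) ^ (1/β) with htdef
  -- sums of allocations are 1
  have hsum1 : ∀ j, ∑ i, epAlloc P α wα i j = 1 := by
    intro j
    unfold epAlloc
    rw [← Finset.sum_div, div_self (hS j).ne']
  have hsum2 : ∀ j, ∑ i, epAlloc P α' wα' i j = 1 := by
    intro j
    unfold epAlloc
    rw [← Finset.sum_div, div_self (hS' j).ne']
  -- key pointwise inequality
  have key : ∀ i j, 0 ≤ (epAlloc P α wα i j - epAlloc P α' wα' i j) * (γ i * P i j - t j) := by
    intro i j
    have hp : 0 < P i j := hP i j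
    have hpa' : 0 < P i j ^ α' := Real.rpow_pos_of_pos hp α'
    have hpb : 0 < P i j ^ β := Real.rpow_pos_of_pos hp β
    have hγp : γ i * P i j = (P i j ^ β * (wα i / wα' i)) ^ (1/β) := by
      rw [Real.mul_rpow hpb.le (div_nonneg (hwα i).le (hwα' i).le),
        ← Real.rpow_mul hp.le, mul_one_div, div_self hβ.ne', Real.rpow_one, hγdef]
      ring
    have hpa : P i j ^ α = P i j ^ α' * P i j ^ β := by
      rw [← Real.rpow_add hp]
      congr 1
      rw [hβdef]; ring
    have halloc : epAlloc P α wα i j = P i j ^ α * wα i / S j := rfl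
    have halloc' : epAlloc P α' wα' i j = P i j ^ α' * wα' i / S' j := rfl
    rcases le_total (S j * wα' i) (P i j ^ β * wα i * S' j) with hle | hle
    · have h1 : S j / S' j ≤ P i j ^ β * (wα i / wα' i) := by
        rw [mul_div_assoc', div_le_div_iff₀ (hS' j) (hwα' i)]
        linarith
      have h2 : t j ≤ γ i * P i j := by
        rw [hγp, htdef]
        exact Real.rpow_le_rpow (div_nonneg (hS j).le (hS' j).le) h1 (by positivity)
      have h3 : epAlloc P α' wα' i j ≤ epAlloc P α wα i j := by
        rw [halloc, halloc', div_le_div_iff₀ (hS' j) (hS j), hpa]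
        nlinarith [mul_le_mul_of_nonneg_left hle hpa'.le]
      exact mul_nonneg (by linarith) (by linarith)
    · have h1 : P i j ^ β * (wα i / wα' i) ≤ S j / S' j := by
        rw [mul_div_assoc', div_le_div_iff₀ (hwα' i) (hS' j)]
        linarith
      have h2 : γ i * P i j ≤ t j := by
        rw [hγp, htdef]
        exact Real.rpow_le_rpow (mul_nonneg hpb.le (div_nonneg (hwα i).le (hwα' i).le)) h1 (by positivity)
      have h3 : epAlloc P α wα i j ≤ epAlloc P α' wα' i j := by
        rw [halloc, halloc', div_le_div_iff₀ (hS j) (hS' j), hpa]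
        nlinarith [mul_le_mul_of_nonneg_left hle hpa'.le]
      nlinarith [mul_nonneg (sub_nonneg.2 h3) (sub_nonneg.2 h2)]
  -- per-item inequality
  have perj : ∀ j, 0 ≤ ∑ i, γ i * (epAlloc P α wα i j * P i j - epAlloc P α' wα' i j * P i j) := by
    intro j
    have h0 : ∑ i, t j * (epAlloc P α wα i j - epAlloc P α' wα' i j) = 0 := by
      rw [← Finset.mul_sum, Finset.sum_sub_distrib, hsum1 j, hsum2 j]
      ring
    have hle : ∑ i, t j * (epAlloc P α wα i j - epAlloc P α' wα' i j)
        ≤ ∑ i, γ i * (epAlloc P α wα i j * P i j - epAlloc P α' wα' i j * P i j) := by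
      apply Finset.sum_le_sum
      intro i _
      nlinarith [key i j]
    linarith
  -- combine
  have main : 0 ≤ ∑ i, γ i * (epLoad P α wα i - epLoad P α' wα' i) := by
    unfold epLoad
    have : ∀ i, γ i * ((∑ j, epAlloc P α wα i j * P i j) - ∑ j, epAlloc P α' wα' i j * P i j)
        = ∑ j, γ i * (epAlloc P α wα i j * P i j - epAlloc P α' wα' i j * P i j) := by
      intro i
      rw [← Finset.sum_sub_distrib, Finset.mul_sum]
    simp only [this]
    rw [Finset.sum_comm]
    exact Finset.sum_nonneg fun j _ => perj j
  have neg : ∑ i, γ i * (epLoad P α wα i - epLoad P α' wα' i) < 0 :=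
    Finset.sum_neg (fun i _ => mul_neg_of_pos_of_neg (hγ i) (by linarith [hcon i]))
      Finset.univ_nonempty
  linarith
end

section
/- Fix a weight matrix P ∈ ℝ_{>0}^{m×n} and let α_1, α_2 ∈ ℝ with α_1 ≥ α_2. Suppose w_1 ∈ ℝ_{>0}^m satisfies ℓ_i(P,α_1,w_1) = ℓ_1^* for all i ∈ [m], and w_2 ∈ ℝ_{>0}^m satisfies ℓ_i(P,α_2,w_2) = ℓ_2^* for all i ∈ [m]. Then ℓ_1^* ≥ ℓ_2^*. -/
open Finset

lemma key_pair (β : ℝ) (hβ : 0 ≤ β) (A B : ℝ) (hA : 0 ≤ A) (hB : 0 ≤ B) :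
    0 ≤ (A - B) * (A ^ β - B ^ β) := by
  rcases le_total A B with h | h
  · have := Real.rpow_le_rpow hA h hβ
    nlinarith
  · have := Real.rpow_le_rpow hB h hβ
    exact mul_nonneg (by linarith) (by linarith)

lemma pair_ineq (α α₁ β p q wi wk w1i w1k li lk : ℝ) (hβ : 0 ≤ β)
    (hp : 0 < p) (hq : 0 < q) (hwi : 0 ≤ wi) (hwk : 0 ≤ wk) (hli : 0 ≤ li) (hlk : 0 ≤ lk)
    (hα₁ : α₁ = α + β) (h1 : w1i = wi * li ^ β) (h2 : w1k = wk * lk ^ β) :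
    0 ≤ li * p * (p ^ α₁ * w1i * (q ^ α * wk) - p ^ α * wi * (q ^ α₁ * w1k))
      + lk * q * (q ^ α₁ * w1k * (p ^ α * wi) - q ^ α * wk * (p ^ α₁ * w1i)) := by
  subst hα₁ h1 h2
  have e1 : p ^ (α+β) = p ^ α * p ^ β := Real.rpow_add hp α β
  have e2 : q ^ (α+β) = q ^ α * q ^ β := Real.rpow_add hq α β
  have e3 : (li*p) ^ β = li ^ β * p ^ β := Real.mul_rpow hli hp.le
  have e4 : (lk*q) ^ β = lk ^ β * q ^ β := Real.mul_rpow hlk hq.le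
  have key : 0 ≤ (li*p - lk*q) * ((li*p)^β - (lk*q)^β) :=
    key_pair β hβ _ _ (mul_nonneg hli hp.le) (mul_nonneg hlk hq.le)
  have hC : 0 ≤ (wi * p ^ α) * (wk * q ^ α) :=
    mul_nonneg (mul_nonneg hwi (Real.rpow_nonneg hp.le α))
      (mul_nonneg hwk (Real.rpow_nonneg hq.le α))
  calc (0:ℝ) ≤ (wi * p ^ α) * (wk * q ^ α) * ((li*p - lk*q) * ((li*p)^β - (lk*q)^β)) :=
        mul_nonneg hC key
    _ = _ := by rw [e3, e4, e1, e2]; ring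

lemma denom_pos {m n : ℕ} [NeZero m] (P : Fin m → Fin n → ℝ) (α : ℝ) (w : Fin m → ℝ)
    (hP : ∀ i j, 0 < P i j) (hw : ∀ i, 0 < w i) (j : Fin n) :
    0 < ∑ i', P i' j ^ α * w i' :=
  Finset.sum_pos (fun i _ => mul_pos (Real.rpow_pos_of_pos (hP i j) α) (hw i)) univ_nonempty

theorem stmt9 {m n : ℕ} (hm : 0 < m) (P : Fin m → Fin n → ℝ)
    (hP : ∀ i j, 0 < P i j)
    (α₁ α₂ : ℝ) (hα : α₂ ≤ α₁)
    (w₁ w₂ : Fin m → ℝ) (hw₁ : ∀ i, 0 < w₁ i) (hw₂ : ∀ i, 0 < w₂ i)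
    (l₁ l₂ : ℝ)
    (hl₁ : ∀ i, epLoad P α₁ w₁ i = l₁)
    (hl₂ : ∀ i, epLoad P α₂ w₂ i = l₂) :
    l₂ ≤ l₁ := by
  have : NeZero m := ⟨hm.ne'⟩
  have hne : (univ : Finset (Fin m)).Nonempty := univ_nonempty
  rcases eq_or_lt_of_le hα with heq | hlt
  · -- equal exponents: use the agent maximizing w₁ i / w₂ i
    subst heq
    obtain ⟨i0, -, hi0⟩ :=
      Finset.exists_max_image (univ : Finset (Fin m)) (fun i => w₁ i / w₂ i) hne
    rw [← hl₁ i0, ← hl₂ i0]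
    apply Finset.sum_le_sum
    intro j _
    apply mul_le_mul_of_nonneg_right _ (hP i0 j).le
    unfold epAlloc
    have hD₁ := denom_pos P α₂ w₁ hP hw₁ j
    have hD₂ := denom_pos P α₂ w₂ hP hw₂ j
    rw [div_le_div_iff₀ hD₂ hD₁]
    have hkey : w₂ i0 * ∑ i', P i' j ^ α₂ * w₁ i' ≤ w₁ i0 * ∑ i', P i' j ^ α₂ * w₂ i' := by
      rw [Finset.mul_sum, Finset.mul_sum]
      apply Finset.sum_le_sum
      intro k _
      have h1 : w₁ k / w₂ k ≤ w₁ i0 / w₂ i0 := hi0 k (mem_univ k)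
      have h2 : w₁ k * w₂ i0 ≤ w₁ i0 * w₂ k :=
        (div_le_div_iff₀ (hw₂ k) (hw₂ i0)).mp h1
      have hpk : 0 ≤ P k j ^ α₂ := (Real.rpow_pos_of_pos (hP k j) α₂).le
      nlinarith
    have hpi : 0 ≤ P i0 j ^ α₂ := (Real.rpow_pos_of_pos (hP i0 j) α₂).le
    nlinarith
  · -- strict case
    set β := α₁ - α₂ with hβdef
    have hβ : 0 < β := by simp [hβdef]; linarith
    set lam : Fin m → ℝ := fun i => (w₁ i / w₂ i) ^ (1/β) with hlamdef
    have hlampos : ∀ i, 0 < lam i := fun i =>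
      Real.rpow_pos_of_pos (div_pos (hw₁ i) (hw₂ i)) _
    have hlampow : ∀ i, lam i ^ β = w₁ i / w₂ i := by
      intro i
      simp only [hlamdef]
      rw [← Real.rpow_mul (div_pos (hw₁ i) (hw₂ i)).le, one_div,
        inv_mul_cancel₀ hβ.ne', Real.rpow_one]
    have hw1eq : ∀ i, w₁ i = w₂ i * lam i ^ β := by
      intro i
      rw [hlampow i, mul_comm, div_mul_cancel₀ _ (hw₂ i).ne']
    have hα₁eq : α₁ = α₂ + β := by rw [hβdef]; ring
    -- per-item inequality
    have key : ∀ j, 0 ≤ ∑ i, lam i *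
        (epAlloc P α₁ w₁ i j * P i j - epAlloc P α₂ w₂ i j * P i j) := by
      intro j
      have hD₁ := denom_pos P α₁ w₁ hP hw₁ j
      have hD₂ := denom_pos P α₂ w₂ hP hw₂ j
      set D₁ := ∑ i', P i' j ^ α₁ * w₁ i' with hD₁def
      set D₂ := ∑ i', P i' j ^ α₂ * w₂ i' with hD₂def
      set G : Fin m → Fin m → ℝ := fun i k =>
        lam i * P i j * (P i j ^ α₁ * w₁ i * (P k j ^ α₂ * w₂ k)
          - P i j ^ α₂ * w₂ i * (P k j ^ α₁ * w₁ k)) with hGdef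
      have hId : (∑ i, lam i * (epAlloc P α₁ w₁ i j * P i j - epAlloc P α₂ w₂ i j * P i j))
          * (D₁ * D₂) = ∑ i, ∑ k, G i k := by
        rw [Finset.sum_mul]
        apply Finset.sum_congr rfl
        intro i _
        rw [hGdef]
        simp only
        rw [← Finset.mul_sum]
        have : ∑ k, (P i j ^ α₁ * w₁ i * (P k j ^ α₂ * w₂ k)
            - P i j ^ α₂ * w₂ i * (P k j ^ α₁ * w₁ k))
            = P i j ^ α₁ * w₁ i * D₂ - P i j ^ α₂ * w₂ i * D₁ := by
          rw [Finset.sum_sub_distrib, ← Finset.mul_sum, ← Finset.mul_sum, hD₁def, hD₂def]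
        rw [this]
        unfold epAlloc
        rw [← hD₁def, ← hD₂def]
        field_simp
      have hEnn : 0 ≤ ∑ i, ∑ k, G i k := by
        have hswap : (∑ i, ∑ k, G i k) = ∑ i, ∑ k, G k i := Finset.sum_comm
        have h2 : (2:ℝ) * (∑ i, ∑ k, G i k) = ∑ i, ∑ k, (G i k + G k i) := by
          simp only [Finset.sum_add_distrib]
          rw [← hswap]; ring
        have hpairs : 0 ≤ ∑ i, ∑ k, (G i k + G k i) := by
          apply Finset.sum_nonneg; intro i _
          apply Finset.sum_nonneg; intro k _
          rw [hGdef]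
          simp only
          exact pair_ineq α₂ α₁ β (P i j) (P k j) (w₂ i) (w₂ k) (w₁ i) (w₁ k)
            (lam i) (lam k) hβ.le (hP i j) (hP k j) (hw₂ i).le (hw₂ k).le
            (hlampos i).le (hlampos k).le hα₁eq (hw1eq i) (hw1eq k)
        linarith
      nlinarith [mul_pos hD₁ hD₂]
    -- sum over items
    have hsum : 0 ≤ ∑ i, lam i * (epLoad P α₁ w₁ i - epLoad P α₂ w₂ i) := by
      have : (∑ i, lam i * (epLoad P α₁ w₁ i - epLoad P α₂ w₂ i))
          = ∑ j, ∑ i, lam i *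
            (epAlloc P α₁ w₁ i j * P i j - epAlloc P α₂ w₂ i j * P i j) := by
        simp only [epLoad, ← Finset.sum_sub_distrib, Finset.mul_sum]
        exact Finset.sum_comm
      rw [this]
      exact Finset.sum_nonneg fun j _ => key j
    have hfin : 0 ≤ (∑ i, lam i) * (l₁ - l₂) := by
      rw [Finset.sum_mul]
      simpa only [hl₁, hl₂] using hsum
    have hlamsum : 0 < ∑ i, lam i :=
      Finset.sum_pos (fun i _ => hlampos i) hne
    nlinarith
end

section
/- For any weight matrix P ∈ ℝ_{>0}^{m×n} and any ε > 0, there exist α ∈ ℝ and a parameter vector w ∈ ℝ_{>0}^m such that ℓ_i(P,α,w) ≤ (1+ε)·ℓ^MKS(P) for every agent i ∈ [m]. -/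
open Finset

/-- A feasible (fractional) assignment: entries in `[0,1]`, each item fully allocated. -/
def Feasible {m n : ℕ} (X : Fin m → Fin n → ℝ) : Prop :=
  (∀ i j, 0 ≤ X i j ∧ X i j ≤ 1) ∧ ∀ j, ∑ i, X i j = 1

/-- Load of agent `i` under the assignment `X`. -/
noncomputable def loadX {m n : ℕ} (P X : Fin m → Fin n → ℝ) (i : Fin m) : ℝ :=
  ∑ j, X i j * P i j

/-- Optimal makespan (MinMax objective). -/
noncomputable def MKS {m n : ℕ} (P : Fin m → Fin n → ℝ) : ℝ :=
  sInf { t | ∃ X, Feasible X ∧ t = ⨆ i, loadX P X i }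

/-- Optimal Santa Claus value (MaxMin objective). -/
noncomputable def SNT {m n : ℕ} (P : Fin m → Fin n → ℝ) : ℝ :=
  sSup { t | ∃ X, Feasible X ∧ t = ⨅ i, loadX P X i }


/-!
Let `z` maximize the LP dual `∑ⱼ minᵢ zᵢ pᵢⱼ` of the makespan problem over the simplex, with value
`μ ≤ ℓ^MKS(P)`, and put `yⱼ = minᵢ zᵢ pᵢⱼ`. By the matrix scaling theorem, for every `β > 0` there
are weights `w` for which the EP-allocation `x` with exponent `-β` gives each agent exactly
`∑ⱼ yⱼ xᵢⱼ = μ zᵢ`. Writing `log (zᵢ pᵢⱼ / yⱼ)` through `log xᵢⱼ`, complementary slackness for `z`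
and the bound `log m` on the entropy of each column of `x` show that the total excess
`∑ⱼ yⱼ ∑ᵢ xᵢⱼ log (zᵢ pᵢⱼ / yⱼ)` is at most `μ log m / β`. Hence `zᵢ ℓᵢ ≤ μ zᵢ (1 + ε)` once `β` is
large.
-/

section Dual

variable {ι κ : Type*} [Fintype ι] [Nonempty ι]

noncomputable def dualPrice (P : ι → κ → ℝ) (z : ι → ℝ) (j : κ) : ℝ :=
  univ.inf' univ_nonempty fun i => z i * P i j

noncomputable def dualValue [Fintype κ] (P : ι → κ → ℝ) (z : ι → ℝ) : ℝ :=
  ∑ j, dualPrice P z j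

variable {P : ι → κ → ℝ} {z : ι → ℝ}

lemma dualPrice_le (i : ι) (j : κ) : dualPrice P z j ≤ z i * P i j :=
  inf'_le _ (mem_univ i)

lemma le_dualPrice {a : ℝ} {j : κ} (h : ∀ i, a ≤ z i * P i j) : a ≤ dualPrice P z j :=
  le_inf' _ _ fun i _ => h i

lemma dualPrice_pos (hP : ∀ i j, 0 < P i j) (hz : ∀ i, 0 < z i) (j : κ) :
    0 < dualPrice P z j :=
  (lt_inf'_iff _).2 fun i _ => mul_pos (hz i) (hP i j)

lemma dualValue_smul [Fintype κ] {c : ℝ} (hc : 0 ≤ c) (z : ι → ℝ) :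
    dualValue P (c • z) = c * dualValue P z := by
  have hprice (j : κ) : dualPrice P (c • z) j = c * dualPrice P z j := by
    rw [dualPrice, dualPrice, apply_inf'_eq_inf'_comp _ _ fun x y => mul_min_of_nonneg x y hc]
    simp only [Pi.smul_apply, smul_eq_mul, Function.comp_def, mul_assoc]
  simp only [dualValue, hprice, mul_sum]

lemma continuous_dualValue [Fintype κ] (P : ι → κ → ℝ) : Continuous (dualValue P) :=
  continuous_finsetSum _ fun _ _ =>
    Continuous.finset_inf'_apply _ fun i _ => (continuous_apply i).mul continuous_const

lemma exists_isMaxOn_dualValue [Fintype κ] (P : ι → κ → ℝ) :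
    ∃ z ∈ stdSimplex ℝ ι, IsMaxOn (dualValue P) (stdSimplex ℝ ι) z :=
  (isCompact_stdSimplex ℝ ι).exists_isMaxOn ⟨_, stdSimplex.barycenter.2⟩
    (continuous_dualValue P).continuousOn

lemma dualValue_le_mul_sum [Fintype κ] (hz : IsMaxOn (dualValue P) (stdSimplex ℝ ι) z) {z' : ι → ℝ}
    (hz' : ∀ i, 0 ≤ z' i) : dualValue P z' ≤ dualValue P z * ∑ i, z' i := by
  rcases (sum_nonneg fun i _ => hz' i).eq_or_lt with hσ | hσ
  · obtain rfl : z' = 0 :=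
      funext fun i => (sum_eq_zero_iff_of_nonneg fun i _ => hz' i).1 hσ.symm i (mem_univ i)
    simpa using (dualValue_smul (P := P) le_rfl (0 : ι → ℝ)).le
  · have hmem : (∑ i, z' i)⁻¹ • z' ∈ stdSimplex ℝ ι :=
      ⟨fun i => mul_nonneg (inv_nonneg.2 hσ.le) (hz' i), by
        simp only [Pi.smul_apply, smul_eq_mul, ← mul_sum, inv_mul_cancel₀ hσ.ne']⟩
    have h := hz hmem
    rw [Set.mem_ofPred_eq, dualValue_smul (inv_nonneg.2 hσ.le), inv_mul_le_iff₀ hσ] at h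
    linarith

lemma pos_of_isMaxOn_dualValue [Fintype κ] [Nonempty κ] (hP : ∀ i j, 0 < P i j)
    (hzΔ : z ∈ stdSimplex ℝ ι) (hz : IsMaxOn (dualValue P) (stdSimplex ℝ ι) z) (i : ι) :
    0 < z i := by
  refine (hzΔ.1 i).lt_of_ne' fun hzi => ?_
  have hzero : dualValue P z ≤ 0 :=
    sum_nonpos fun j _ => (dualPrice_le i j).trans (by rw [hzi, zero_mul])
  have hbary : 0 < dualValue P (stdSimplex.barycenter (𝕜 := ℝ) (X := ι)).1 :=
    sum_pos (fun j _ => dualPrice_pos hP (fun _ => inv_pos.2 (Nat.cast_pos.2 Fintype.card_pos)) j)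
      univ_nonempty
  exact (hbary.trans_le (hz stdSimplex.barycenter.2)).not_ge hzero

/- Complementary slackness for `z`. Perturb `z` to `zᵢ (1 - s dᵢ)` with small `s > 0`: every
`dualPrice` grows at least like `yⱼ (1 + s tⱼ)`, on tight pairs by `htight` and on the others by
continuity, while maximality caps the dual value at `μ (1 - s ∑ zᵢ dᵢ)`. -/
lemma sum_dualPrice_mul_add_le_zero [Fintype κ] (hP : ∀ i j, 0 ≤ P i j) (hzΔ : z ∈ stdSimplex ℝ ι)
    (hz : IsMaxOn (dualValue P) (stdSimplex ℝ ι) z) {d : ι → ℝ} {t : κ → ℝ}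
    (htight : ∀ i j, z i * P i j = dualPrice P z j → d i + t j ≤ 0) :
    ∑ j, dualPrice P z j * t j + dualValue P z * ∑ i, z i * d i ≤ 0 := by
  have hev : ∀ᶠ s in nhdsWithin (0 : ℝ) (Set.Ioi 0), 0 < s ∧ (∀ i, 0 ≤ 1 - s * d i) ∧
      ∀ i j, dualPrice P z j * (1 + s * t j) ≤ z i * (1 - s * d i) * P i j := by
    refine eventually_mem_nhdsWithin.and ((Filter.eventually_all.2 fun i => ?_).and
      (Filter.eventually_all.2 fun i => Filter.eventually_all.2 fun j => ?_))
    · refine nhdsWithin_le_nhds ((ContinuousAt.eventually_lt (f := fun _ => (0 : ℝ))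
        (by fun_prop) (by fun_prop) (by simp)).mono fun s hs => hs.le)
    · by_cases htj : z i * P i j = dualPrice P z j
      · filter_upwards [self_mem_nhdsWithin] with s (hs : 0 < s)
        rw [mul_right_comm, htj]
        have hy : 0 ≤ dualPrice P z j := htj ▸ mul_nonneg (hzΔ.1 i) (hP i j)
        exact mul_le_mul_of_nonneg_left (by nlinarith [htight i j htj]) hy
      · have hlt : dualPrice P z j < z i * P i j := (dualPrice_le i j).lt_of_ne' htj
        exact nhdsWithin_le_nhds ((ContinuousAt.eventually_lt (by fun_prop) (by fun_prop)
          (by simpa using hlt)).mono fun s hs => hs.le)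
  obtain ⟨s, hs, hsd, hst⟩ := hev.exists
  have hlower : dualValue P z + s * ∑ j, dualPrice P z j * t j ≤
      dualValue P fun i => z i * (1 - s * d i) := by
    rw [dualValue, mul_sum, ← sum_add_distrib]
    exact sum_le_sum fun j _ => le_dualPrice fun i => by linarith [hst i j]
  have hupper := dualValue_le_mul_sum hz fun i => mul_nonneg (hzΔ.1 i) (hsd i)
  have hsum : ∑ i, z i * (1 - s * d i) = 1 - s * ∑ i, z i * d i := by
    simp only [mul_sub, mul_one, sum_sub_distrib, hzΔ.2, mul_sum, mul_left_comm]
  rw [hsum] at hupper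
  refine le_of_mul_le_mul_left ?_ hs
  nlinarith

end Dual

section Makespan

variable {m n : ℕ} {P : Fin m → Fin n → ℝ}

lemma MKS_nonneg (hP : ∀ i j, 0 ≤ P i j) : 0 ≤ MKS P :=
  Real.sInf_nonneg <| by
    rintro _ ⟨X, hX, rfl⟩
    exact Real.iSup_nonneg fun i => sum_nonneg fun j _ => mul_nonneg (hX.1 i j).1 (hP i j)

lemma feasible_const_inv [Nonempty (Fin m)] :
    Feasible (fun (_ : Fin m) (_ : Fin n) => (m : ℝ)⁻¹) := by
  have hm : (1 : ℝ) ≤ m := by exact_mod_cast Fin.pos_iff_nonempty.2 ‹_›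
  refine ⟨fun _ _ => ⟨by positivity, inv_le_one_of_one_le₀ hm⟩, fun _ => ?_⟩
  simp [(zero_lt_one.trans_le hm).ne']

lemma dualValue_le_MKS [Nonempty (Fin m)] {z : Fin m → ℝ} (hz : z ∈ stdSimplex ℝ (Fin m)) :
    dualValue P z ≤ MKS P := by
  refine le_csInf ⟨_, _, feasible_const_inv, rfl⟩ ?_
  rintro _ ⟨X, hX, rfl⟩
  calc dualValue P z = ∑ j, ∑ i, X i j * dualPrice P z j := by simp [dualValue, ← sum_mul, hX.2]
    _ ≤ ∑ j, ∑ i, X i j * (z i * P i j) := by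
      gcongr with j _ i _
      exacts [(hX.1 i j).1, dualPrice_le i j]
    _ = ∑ i, z i * loadX P X i := by
      rw [sum_comm]
      simp only [loadX, mul_sum]
      exact sum_congr rfl fun i _ => sum_congr rfl fun j _ => by ring
    _ ≤ ∑ i, z i * ⨆ i', loadX P X i' := by
      gcongr with i _
      exacts [hz.1 i, le_ciSup (Finite.bddAbove_range _) i]
    _ = ⨆ i, loadX P X i := by rw [← sum_mul, hz.2, one_mul]

end Makespan

lemma sum_negMulLog_le_log_card {ι : Type*} [Fintype ι] [Nonempty ι] {x : ι → ℝ}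
    (hx : ∀ i, 0 ≤ x i) (hsum : ∑ i, x i = 1) :
    ∑ i, Real.negMulLog (x i) ≤ Real.log (Fintype.card ι) := by
  have hN : (0 : ℝ) < Fintype.card ι := by exact_mod_cast Fintype.card_pos
  have hJensen := Real.concaveOn_negMulLog.le_map_sum (t := univ)
    (w := fun _ => (Fintype.card ι : ℝ)⁻¹) (p := x) (fun _ _ => by positivity) (by simp [hN.ne'])
    fun i _ => Set.mem_Ici.2 (hx i)
  simp only [smul_eq_mul, ← mul_sum, hsum, mul_one] at hJensen
  rw [← mul_le_mul_iff_right₀ (inv_pos.2 hN)]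
  simpa [Real.negMulLog, Real.log_inv] using hJensen

section Scaling

variable {ι κ : Type*} [Fintype ι] {A : ι → κ → ℝ} {ρ : κ → ℝ} {θ : ι → ℝ}

/- A potential whose gradient at `c` is `(∑ⱼ ρⱼ xᵢⱼ - θᵢ)ᵢ`, where `x` is the scaling of
`A` with row weights `exp cᵢ` and unit column sums; its minimizers solve the scaling problem. -/
noncomputable def scalingPotential [Fintype κ] (A : ι → κ → ℝ) (ρ : κ → ℝ) (θ : ι → ℝ)
    (c : ι → ℝ) : ℝ :=
  ∑ j, ρ j * Real.log (∑ i, A i j * Real.exp (c i)) - ∑ i, θ i * c i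

lemma sum_mul_exp_pos [Nonempty ι] (hA : ∀ i j, 0 < A i j) (c : ι → ℝ) (j : κ) :
    0 < ∑ i, A i j * Real.exp (c i) :=
  sum_pos (fun i _ => mul_pos (hA i j) (Real.exp_pos _)) univ_nonempty

lemma continuous_scalingPotential [Fintype κ] [Nonempty ι] (hA : ∀ i j, 0 < A i j) :
    Continuous (scalingPotential A ρ θ) :=
  .sub (continuous_finsetSum _ fun j _ => continuous_const.mul <|
    Continuous.log (by fun_prop) fun c => (sum_mul_exp_pos hA c j).ne') (by fun_prop)

lemma scalingPotential_add_const [Fintype κ] [Nonempty ι] (hA : ∀ i j, 0 < A i j)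
    (hsum : ∑ i, θ i = ∑ j, ρ j) (c : ι → ℝ) (r : ℝ) :
    scalingPotential A ρ θ (fun i => c i + r) = scalingPotential A ρ θ c := by
  have hlog (j : κ) : Real.log (∑ i, A i j * Real.exp (c i + r)) =
      r + Real.log (∑ i, A i j * Real.exp (c i)) := by
    simp only [Real.exp_add, ← mul_assoc, ← sum_mul]
    rw [Real.log_mul (sum_mul_exp_pos hA c j).ne' (Real.exp_pos r).ne', Real.log_exp, add_comm]
  simp only [scalingPotential, hlog, mul_add, sum_add_distrib, ← sum_mul, hsum]
  ring

lemma scalingPotential_ge [Fintype κ] (hA : ∀ i j, 0 < A i j) (hρ : ∀ j, 0 ≤ ρ j)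
    (hsum : ∑ i, θ i = ∑ j, ρ j) (c : ι → ℝ) (k : ι) :
    ∑ j, ρ j * Real.log (A k j) + ∑ i, θ i * (c k - c i) ≤ scalingPotential A ρ θ c := by
  have hlog (j : κ) : Real.log (A k j) + c k ≤ Real.log (∑ i, A i j * Real.exp (c i)) := by
    have hk := mul_pos (hA k j) (Real.exp_pos (c k))
    rw [← Real.log_exp (c k), ← Real.log_mul (hA k j).ne' (Real.exp_pos _).ne']
    exact Real.log_le_log hk <| single_le_sum (f := fun i => A i j * Real.exp (c i))
      (fun i _ => (mul_pos (hA i j) (Real.exp_pos _)).le) (mem_univ k)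
  calc _ = ∑ j, ρ j * (Real.log (A k j) + c k) - ∑ i, θ i * c i := by
        simp only [mul_add, sum_add_distrib, mul_sub, sum_sub_distrib, ← sum_mul, hsum]
        ring
    _ ≤ _ := by
      unfold scalingPotential
      gcongr with j
      exacts [hρ j, hlog j]

lemma exists_forall_scalingPotential_le [Fintype κ] [Nonempty ι] (hA : ∀ i j, 0 < A i j)
    (hρ : ∀ j, 0 ≤ ρ j) (hθ : ∀ i, 0 < θ i) (hsum : ∑ i, θ i = ∑ j, ρ j) :
    ∃ c, ∀ c', scalingPotential A ρ θ c ≤ scalingPotential A ρ θ c' := by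
  set f := scalingPotential A ρ θ
  obtain ⟨a, ha⟩ := Finite.exists_ge fun k => ∑ j, ρ j * Real.log (A k j)
  obtain ⟨R, hR, hR0⟩ : ∃ R, (∀ i, f 0 - a ≤ θ i * R) ∧ 0 ≤ R :=
    ((Filter.eventually_all.2 fun i =>
      (Filter.tendsto_id.const_mul_atTop (hθ i)).eventually_ge_atTop _).and
        (Filter.eventually_ge_atTop 0)).exists
  have h0 : (0 : ι → ℝ) ∈ Set.Icc (fun _ => -R) (0 : ι → ℝ) := ⟨fun _ => by simpa using hR0, le_rfl⟩
  obtain ⟨c₀, -, hc₀⟩ :=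
    isCompact_Icc.exists_isMinOn ⟨0, h0⟩ (continuous_scalingPotential hA).continuousOn
  refine ⟨c₀, fun c => ?_⟩
  obtain ⟨k, hk⟩ := Finite.exists_max c
  by_cases hbox : ∀ i, c k - c i ≤ R
  · have hmem : (fun i => c i + -c k) ∈ Set.Icc (fun _ => -R) (0 : ι → ℝ) :=
      ⟨fun i => by linarith [hbox i], fun i => by simpa using hk i⟩
    calc f c₀ ≤ f (fun i => c i + -c k) := hc₀ hmem
      _ = f c := scalingPotential_add_const hA hsum c _
  · push Not at hbox
    obtain ⟨i, hi⟩ := hbox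
    have hterm : θ i * R ≤ ∑ i', θ i' * (c k - c i') :=
      (mul_le_mul_of_nonneg_left hi.le (hθ i).le).trans <|
        single_le_sum (f := fun i' => θ i' * (c k - c i'))
          (fun i' _ => mul_nonneg (hθ i').le (by linarith [hk i'])) (mem_univ i)
    calc f c₀ ≤ f 0 := hc₀ h0
      _ ≤ ∑ j, ρ j * Real.log (A k j) + ∑ i', θ i' * (c k - c i') := by linarith [hR i, ha k]
      _ ≤ f c := scalingPotential_ge hA hρ hsum c k

lemma hasDerivAt_scalingPotential_line [Fintype κ] [Nonempty ι] (hA : ∀ i j, 0 < A i j)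
    (c v : ι → ℝ) :
    HasDerivAt (fun u : ℝ => scalingPotential A ρ θ (c + u • v))
      (∑ j, ρ j * ((∑ i, A i j * Real.exp (c i) * v i) / ∑ i, A i j * Real.exp (c i)) -
        ∑ i, θ i * v i) 0 := by
  have hline (u : ℝ) (i : ι) : (c + u • v) i = c i + u * v i := rfl
  have hexp (i : ι) (j : κ) : HasDerivAt (fun u => A i j * Real.exp (c i + u * v i))
      (A i j * Real.exp (c i) * v i) 0 := by
    simpa [mul_assoc] using
      (((hasDerivAt_mul_const (v i)).const_add (c i)).exp).const_mul (A i j) (x := (0 : ℝ))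
  simp only [scalingPotential, hline]
  refine .sub (HasDerivAt.fun_sum fun j _ => .const_mul _ ?_) (HasDerivAt.fun_sum fun i _ => ?_)
  · refine ((HasDerivAt.fun_sum fun i _ => hexp i j).log ?_).congr_deriv ?_ <;>
      simp [(sum_mul_exp_pos hA c j).ne']
  · simpa using ((hasDerivAt_mul_const (v i)).const_add (c i)).const_mul (θ i) (x := (0 : ℝ))

theorem exists_matrix_scaling [Fintype κ] [Nonempty ι] (hA : ∀ i j, 0 < A i j)
    (hρ : ∀ j, 0 ≤ ρ j) (hθ : ∀ i, 0 < θ i) (hsum : ∑ i, θ i = ∑ j, ρ j) :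
    ∃ w : ι → ℝ, (∀ i, 0 < w i) ∧
      ∀ i, ∑ j, ρ j * (A i j * w i / ∑ k, A k j * w k) = θ i := by
  classical
  obtain ⟨c, hc⟩ := exists_forall_scalingPotential_le hA hρ hθ hsum
  refine ⟨fun i => Real.exp (c i), fun i => Real.exp_pos _, fun i => ?_⟩
  have hmin : IsLocalMin (fun u : ℝ => scalingPotential A ρ θ (c + u • Pi.single i 1)) 0 :=
    Filter.Eventually.of_forall fun u => by simpa using hc _
  have hstat := hmin.hasDerivAt_eq_zero (hasDerivAt_scalingPotential_line hA c (Pi.single i 1))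
  simp only [Pi.single_apply, mul_ite, mul_one, mul_zero, sum_ite_eq', mem_univ, if_true] at hstat
  simpa [sub_eq_zero] using hstat

end Scaling

section EPAllocation

variable {m n : ℕ} {P : Fin m → Fin n → ℝ} {α : ℝ} {w : Fin m → ℝ}

lemma sum_rpow_mul_pos [Nonempty (Fin m)] (hP : ∀ i j, 0 < P i j) (hw : ∀ i, 0 < w i)
    (j : Fin n) : 0 < ∑ k, P k j ^ α * w k :=
  sum_pos (fun k _ => mul_pos (Real.rpow_pos_of_pos (hP k j) α) (hw k)) univ_nonempty

lemma epAlloc_pos (hP : ∀ i j, 0 < P i j) (hw : ∀ i, 0 < w i) (i : Fin m) (j : Fin n) :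
    0 < epAlloc P α w i j :=
  have : Nonempty (Fin m) := ⟨i⟩
  div_pos (mul_pos (Real.rpow_pos_of_pos (hP i j) α) (hw i)) (sum_rpow_mul_pos hP hw j)

lemma sum_epAlloc [Nonempty (Fin m)] (hP : ∀ i j, 0 < P i j) (hw : ∀ i, 0 < w i) (j : Fin n) :
    ∑ i, epAlloc P α w i j = 1 := by
  simp only [epAlloc, ← sum_div]
  exact div_self (sum_rpow_mul_pos hP hw j).ne'

lemma epAlloc_le_one (hP : ∀ i j, 0 < P i j) (hw : ∀ i, 0 < w i) (i : Fin m) (j : Fin n) :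
    epAlloc P α w i j ≤ 1 :=
  have : Nonempty (Fin m) := ⟨i⟩
  sum_epAlloc hP hw j ▸ single_le_sum (fun k _ => (epAlloc_pos hP hw k j).le) (mem_univ i)

lemma log_epAlloc (hP : ∀ i j, 0 < P i j) (hw : ∀ i, 0 < w i) (i : Fin m) (j : Fin n) :
    Real.log (epAlloc P α w i j) =
      α * Real.log (P i j) + Real.log (w i) - Real.log (∑ k, P k j ^ α * w k) := by
  have : Nonempty (Fin m) := ⟨i⟩
  have hPα := Real.rpow_pos_of_pos (hP i j) α
  rw [epAlloc, Real.log_div (mul_pos hPα (hw i)).ne' (sum_rpow_mul_pos hP hw j).ne',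
    Real.log_mul hPα.ne' (hw i).ne', Real.log_rpow (hP i j)]

end EPAllocation

section LoadBound

variable {m n : ℕ} [Nonempty (Fin m)] {P : Fin m → Fin n → ℝ} {z w : Fin m → ℝ} {β : ℝ}

lemma sum_dualPrice_mul_slack_le (hP : ∀ i j, 0 < P i j) (hzΔ : z ∈ stdSimplex ℝ (Fin m))
    (hz : IsMaxOn (dualValue P) (stdSimplex ℝ (Fin m)) z) (hzpos : ∀ i, 0 < z i) (hβ : 0 < β)
    (hw : ∀ i, 0 < w i)
    (hcount : ∀ i, ∑ j, dualPrice P z j * epAlloc P (-β) w i j = dualValue P z * z i) :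
    ∑ j, dualPrice P z j * ∑ i, epAlloc P (-β) w i j * Real.log (z i * P i j / dualPrice P z j) ≤
      dualValue P z * Real.log m / β := by
  set y := dualPrice P z
  set x := epAlloc P (-β) w
  set d : Fin m → ℝ := fun i => Real.log (z i) + β⁻¹ * Real.log (w i)
  set t : Fin n → ℝ := fun j => -(β⁻¹ * Real.log (∑ k, P k j ^ (-β) * w k)) - Real.log (y j)
  have hy := dualPrice_pos hP hzpos
  have hslack (i : Fin m) (j : Fin n) :
      Real.log (z i * P i j / y j) = d i + t j - β⁻¹ * Real.log (x i j) := by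
    rw [log_epAlloc hP hw, Real.log_div (mul_pos (hzpos i) (hP i j)).ne' (hy j).ne',
      Real.log_mul (hzpos i).ne' (hP i j).ne']
    simp only [d, t, y]
    field_simp
    ring
  have htight (i : Fin m) (j : Fin n) (h : z i * P i j = y j) : d i + t j ≤ 0 := by
    have hx : β⁻¹ * Real.log (x i j) ≤ 0 := mul_nonpos_of_nonneg_of_nonpos (inv_nonneg.2 hβ.le)
      (Real.log_nonpos (epAlloc_pos hP hw i j).le (epAlloc_le_one hP hw i j))
    linarith [hslack i j, show Real.log (z i * P i j / y j) = 0 by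
      rw [h, div_self (hy j).ne', Real.log_one]]
  have hd : ∑ j, ∑ i, y j * x i j * d i = dualValue P z * ∑ i, z i * d i := by
    rw [sum_comm, mul_sum]
    exact sum_congr rfl fun i _ => by rw [← sum_mul, hcount, mul_assoc]
  have ht : ∑ j, y j * t j * ∑ i, x i j = ∑ j, y j * t j := by
    simp only [x, sum_epAlloc hP hw, mul_one]
  have hent (j : Fin n) : ∑ i, Real.negMulLog (x i j) ≤ Real.log m := by
    simpa using
      sum_negMulLog_le_log_card (fun i => (epAlloc_pos hP hw i j).le) (sum_epAlloc hP hw j)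
  calc _ = ∑ j, y j * ∑ i, x i j * (d i + t j - β⁻¹ * Real.log (x i j)) := by simp only [hslack]
    _ = ∑ j, ∑ i, y j * x i j * d i + ∑ j, y j * t j * ∑ i, x i j +
          β⁻¹ * ∑ j, y j * ∑ i, Real.negMulLog (x i j) := by
      simp only [mul_sum, Real.negMulLog, ← sum_add_distrib]
      exact sum_congr rfl fun j _ => sum_congr rfl fun i _ => by ring
    _ ≤ 0 + β⁻¹ * ∑ j, y j * Real.log m := by
      rw [hd, ht, add_comm (dualValue P z * _)]
      gcongr with j
      exacts [sum_dualPrice_mul_add_le_zero (fun i j => (hP i j).le) hzΔ hz htight, (hy j).le,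
        hent j]
    _ = dualValue P z * Real.log m / β := by
      rw [← sum_mul, zero_add]
      field_simp
      exact mul_comm _ _

lemma le_one_add_mul_log {r R : ℝ} (hr : 1 ≤ r) (hrR : r ≤ R) : r ≤ 1 + R * Real.log r := by
  have := Real.self_sub_one_le_mul_log (zero_le_one.trans hr)
  have := mul_le_mul_of_nonneg_right hrR (Real.log_nonneg hr)
  linarith

lemma mul_epLoad_le [Nonempty (Fin n)] {R : ℝ} (hP : ∀ i j, 0 < P i j)
    (hzΔ : z ∈ stdSimplex ℝ (Fin m)) (hz : IsMaxOn (dualValue P) (stdSimplex ℝ (Fin m)) z)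
    (hzpos : ∀ i, 0 < z i) (hβ : 0 < β) (hw : ∀ i, 0 < w i)
    (hcount : ∀ i, ∑ j, dualPrice P z j * epAlloc P (-β) w i j = dualValue P z * z i)
    (hR : ∀ i j, z i * P i j / dualPrice P z j ≤ R) (i : Fin m) :
    z i * epLoad P (-β) w i ≤ dualValue P z * z i + R * (dualValue P z * Real.log m / β) := by
  set y := dualPrice P z
  set x := epAlloc P (-β) w
  have hy : ∀ j, 0 < y j := dualPrice_pos hP hzpos
  have hr (i : Fin m) (j : Fin n) : 1 ≤ z i * P i j / y j :=
    (one_le_div (hy j)).2 (dualPrice_le i j)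
  have hR0 : 0 ≤ R := zero_le_one.trans <| (hr i (Classical.arbitrary _)).trans (hR _ _)
  calc z i * epLoad P (-β) w i = ∑ j, y j * x i j * (z i * P i j / y j) := by
        simp only [epLoad, mul_sum]
        exact sum_congr rfl fun j _ => by simp only [x]; field_simp [(hy j).ne']
    _ ≤ ∑ j, y j * x i j * (1 + R * Real.log (z i * P i j / y j)) := by
      gcongr with j
      · exact mul_nonneg (hy j).le (epAlloc_pos hP hw i j).le
      · exact le_one_add_mul_log (hr i j) (hR i j)
    _ = dualValue P z * z i + R * ∑ j, y j * (x i j * Real.log (z i * P i j / y j)) := by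
      simp only [mul_add, mul_one, sum_add_distrib, hcount, mul_sum]
      exact congrArg _ (sum_congr rfl fun j _ => by ring)
    _ ≤ dualValue P z * z i +
          R * ∑ j, y j * ∑ i, x i j * Real.log (z i * P i j / y j) := by
      gcongr with j
      · exact (hy j).le
      · exact single_le_sum (f := fun i => x i j * Real.log (z i * P i j / y j))
          (fun i _ => mul_nonneg (epAlloc_pos hP hw i j).le (Real.log_nonneg (hr i j))) (mem_univ i)
    _ ≤ _ := by
      gcongr
      exact sum_dualPrice_mul_slack_le hP hzΔ hz hzpos hβ hw hcount

end LoadBound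

theorem stmt10 {m n : ℕ} (hm : 0 < m) (P : Fin m → Fin n → ℝ)
    (hP : ∀ i j, 0 < P i j) (ε : ℝ) (hε : 0 < ε) :
    ∃ (α : ℝ) (w : Fin m → ℝ), (∀ i, 0 < w i) ∧
      ∀ i, epLoad P α w i ≤ (1 + ε) * MKS P := by
  have : Nonempty (Fin m) := Fin.pos_iff_nonempty.1 hm
  rcases isEmpty_or_nonempty (Fin n) with hn | hn
  · refine ⟨0, 1, fun _ => one_pos, fun i => ?_⟩
    simpa [epLoad] using mul_nonneg (by linarith) (MKS_nonneg fun i j => (hP i j).le)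
  obtain ⟨z, hzΔ, hz⟩ := exists_isMaxOn_dualValue P
  have hzpos := pos_of_isMaxOn_dualValue hP hzΔ hz
  set μ := dualValue P z
  have hμ : 0 < μ := sum_pos (fun j _ => dualPrice_pos hP hzpos j) univ_nonempty
  obtain ⟨R, hR⟩ := Finite.exists_le fun p : Fin m × Fin n => z p.1 * P p.1 p.2 / dualPrice P z p.2
  obtain ⟨β, hβR, hβ⟩ : ∃ β, (∀ i, R * Real.log m ≤ β * (ε * z i)) ∧ 0 < β :=
    ((Filter.eventually_all.2 fun i => (Filter.tendsto_id.atTop_mul_const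
      (mul_pos hε (hzpos i))).eventually_ge_atTop _).and (Filter.eventually_gt_atTop 0)).exists
  obtain ⟨w, hw, hcount⟩ := exists_matrix_scaling (A := fun i j => P i j ^ (-β))
    (fun i j => Real.rpow_pos_of_pos (hP i j) _) (fun j => (dualPrice_pos hP hzpos j).le)
    (fun i => mul_pos hμ (hzpos i)) (by rw [← mul_sum, hzΔ.2, mul_one]; rfl)
  refine ⟨-β, w, hw, fun i => ?_⟩
  have hload := mul_epLoad_le hP hzΔ hz hzpos hβ hw hcount (fun i j => hR (i, j)) i
  have hloss : R * (μ * Real.log m / β) ≤ μ * (ε * z i) := by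
    rw [mul_div_assoc', mul_left_comm, mul_div_assoc]
    gcongr
    rw [div_le_iff₀ hβ]
    linarith [hβR i]
  have hzload : z i * epLoad P (-β) w i ≤ z i * ((1 + ε) * μ) := by linarith
  calc epLoad P (-β) w i ≤ (1 + ε) * μ := le_of_mul_le_mul_left hzload (hzpos i)
    _ ≤ (1 + ε) * MKS P := by gcongr; exact dualValue_le_MKS hzΔ
end

section
/- For any weight matrix P ∈ ℝ_{>0}^{m×n} and any ε > 0, there exist α ∈ ℝ and a parameter vector w ∈ ℝ_{>0}^m such that ℓ_i(P,α,w) ≥ (1−ε)·ℓ^SNT(P) for every agent i ∈ [m]. -/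
open Finset

/-!
For `c` in the simplex, let `Φ(c) = ∑ⱼ (∑ᵢ (p_{ij} cᵢ)^α)^{1/α}` (`potential`). Every `Φ(c)`
bounds the Santa Claus value, since `minᵢ ℓᵢ(X) ≤ ∑ᵢ cᵢ ℓᵢ(X) ≤ ∑ⱼ maxᵢ p_{ij} cᵢ ≤ Φ(c)`.
For `α > 1`, at a minimiser `c` of `Φ` on the simplex every `cᵢ` is positive and all partial
derivatives of `Φ` agree, hence equal `Φ(c)` by Euler's identity for the `1`-homogeneous `Φ`.
For the weights `wᵢ = cᵢ^α` the power-mean inequality turns this into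
`ℓᵢ(P, α, w) ≥ Φ(c) · cᵢ^{1/α}`, and comparing the same identity termwise gives
`cᵢ^{1/α} ≥ r^{1/(α-1)}` with `r = min p / (m · max p)`, which tends to `1` as `α → ∞`.
-/

open Real

theorem exists_pos_of_mem_stdSimplex {ι : Type*} [Fintype ι] {c : ι → ℝ}
    (hc : c ∈ stdSimplex ℝ ι) : ∃ i, 0 < c i := by
  obtain ⟨i, -, hi⟩ := exists_lt_of_sum_lt (s := univ) (f := 0) (g := c) (by simp [hc.2])
  exact ⟨i, hi⟩

theorem IsMinOn.fderiv_single_le_of_stdSimplex {ι : Type*} [Fintype ι] [DecidableEq ι]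
    {f : (ι → ℝ) → ℝ} {c : ι → ℝ} (hc : c ∈ stdSimplex ℝ ι)
    (hmin : IsMinOn f (stdSimplex ℝ ι) c) (hf : DifferentiableAt ℝ f c) {k : ι} (hk : 0 < c k)
    (i : ι) : fderiv ℝ f c (Pi.single k 1) ≤ fderiv ℝ f c (Pi.single i 1) := by
  set v : ι → ℝ := c k • (Pi.single i 1 - Pi.single k 1)
  have hv : c + v ∈ stdSimplex ℝ ι := by
    refine ⟨fun t => ?_, ?_⟩
    · have := hc.1 t
      simp only [v, Pi.add_apply, Pi.smul_apply, Pi.sub_apply, Pi.single_apply, smul_eq_mul]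
      split_ifs <;> subst_vars <;> linarith
    · simp [v, sum_add_distrib, ← mul_sum, sum_sub_distrib, hc.2]
  have hcone : v ∈ posTangentConeAt (stdSimplex ℝ ι) c :=
    mem_posTangentConeAt_of_segment_subset ((convex_stdSimplex ℝ ι).segment_subset hc hv)
  have hder := hmin.localize.hasFDerivWithinAt_nonneg hf.hasFDerivAt.hasFDerivWithinAt hcone
  simp only [v, map_smul, map_sub, smul_eq_mul] at hder
  exact sub_nonneg.1 (nonneg_of_mul_nonneg_right hder hk)

theorem exists_one_lt_and_lt_rpow_inv_sub_one {r t : ℝ} (hr : 0 < r) (ht : t < 1) :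
    ∃ α : ℝ, 1 < α ∧ t < r ^ (α - 1)⁻¹ := by
  have hlim : Filter.Tendsto (fun α : ℝ => r ^ (α - 1)⁻¹) Filter.atTop (nhds 1) := by
    have h0 : Filter.Tendsto (fun α : ℝ => (α - 1)⁻¹) Filter.atTop (nhds 0) :=
      tendsto_inv_atTop_zero.comp (Filter.tendsto_atTop_add_const_right _ (-1) Filter.tendsto_id)
    simpa [Function.comp_def] using (continuousAt_const_rpow hr.ne').tendsto.comp h0
  exact ((hlim.eventually (lt_mem_nhds ht)).and (Filter.eventually_gt_atTop 1)).exists.imp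
    fun _ h => h.symm

section Potential

variable {ι κ : Type*} [Fintype ι] {P : ι → κ → ℝ} {α : ℝ} {c : ι → ℝ}

noncomputable def columnPowSum (P : ι → κ → ℝ) (α : ℝ) (c : ι → ℝ) (j : κ) : ℝ :=
  ∑ i, (P i j * c i) ^ α

theorem rpow_le_columnPowSum (hP : ∀ i j, 0 ≤ P i j) (hc : ∀ i, 0 ≤ c i) (i : ι) (j : κ) :
    (P i j * c i) ^ α ≤ columnPowSum P α c j :=
  single_le_sum (f := fun k => (P k j * c k) ^ α)
    (fun k _ => rpow_nonneg (mul_nonneg (hP k j) (hc k)) α) (mem_univ i)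

theorem columnPowSum_pos (hP : ∀ i j, 0 < P i j) (hc : c ∈ stdSimplex ℝ ι)
    (j : κ) : 0 < columnPowSum P α c j := by
  obtain ⟨i, hi⟩ := exists_pos_of_mem_stdSimplex hc
  exact (rpow_pos_of_pos (mul_pos (hP i j) hi) α).trans_le
    (rpow_le_columnPowSum (fun i j => (hP i j).le) hc.1 i j)

theorem mul_le_columnPowSum_rpow_inv (hP : ∀ i j, 0 ≤ P i j) (hc : ∀ i, 0 ≤ c i) (hα : 0 < α)
    (i : ι) (j : κ) : P i j * c i ≤ columnPowSum P α c j ^ α⁻¹ := by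
  have := rpow_le_rpow (rpow_nonneg (mul_nonneg (hP i j) (hc i)) α)
    (rpow_le_columnPowSum (α := α) hP hc i j) (inv_nonneg.2 hα.le)
  rwa [rpow_rpow_inv (mul_nonneg (hP i j) (hc i)) hα.ne'] at this

variable [Fintype κ]

noncomputable def potential (P : ι → κ → ℝ) (α : ℝ) (c : ι → ℝ) : ℝ :=
  ∑ j, columnPowSum P α c j ^ α⁻¹

noncomputable def potentialGrad (P : ι → κ → ℝ) (α : ℝ) (c : ι → ℝ) (i : ι) : ℝ :=
  ∑ j, columnPowSum P α c j ^ (α⁻¹ - 1) * ((P i j * c i) ^ (α - 1) * P i j)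

theorem potential_nonneg (hP : ∀ i j, 0 ≤ P i j) (hc : ∀ i, 0 ≤ c i) : 0 ≤ potential P α c :=
  sum_nonneg fun j _ =>
    rpow_nonneg (sum_nonneg fun i _ => rpow_nonneg (mul_nonneg (hP i j) (hc i)) α) _

theorem potential_pos [Nonempty κ] (hP : ∀ i j, 0 < P i j) (hc : c ∈ stdSimplex ℝ ι) :
    0 < potential P α c :=
  sum_pos (fun j _ => rpow_pos_of_pos (columnPowSum_pos hP hc j) _) univ_nonempty

theorem continuous_potential (P : ι → κ → ℝ) (hα : 0 < α) : Continuous (potential P α) := by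
  unfold potential columnPowSum
  fun_prop (disch := positivity)

theorem hasFDerivAt_potential (P : ι → κ → ℝ) (hα : 1 ≤ α) (hc : ∀ j, columnPowSum P α c j ≠ 0) :
    HasFDerivAt (potential P α)
      (∑ j, (α⁻¹ * columnPowSum P α c j ^ (α⁻¹ - 1)) •
        ∑ i, (α * (P i j * c i) ^ (α - 1)) • P i j •
          (ContinuousLinearMap.proj i : (ι → ℝ) →L[ℝ] ℝ)) c := by
  refine HasFDerivAt.fun_sum fun j _ => HasFDerivAt.rpow_const ?_ (Or.inl (hc j))
  exact HasFDerivAt.fun_sum fun i _ =>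
    ((hasFDerivAt_apply i c).const_mul (P i j)).rpow_const (Or.inr hα)

theorem fderiv_potential_single [DecidableEq ι] (P : ι → κ → ℝ) (hα : 1 ≤ α)
    (hc : ∀ j, columnPowSum P α c j ≠ 0) (i : ι) :
    fderiv ℝ (potential P α) c (Pi.single i 1) = potentialGrad P α c i := by
  have hα0 : α ≠ 0 := by positivity
  rw [(hasFDerivAt_potential P hα hc).fderiv, potentialGrad]
  simp only [_root_.sum_apply, smul_apply,
    ContinuousLinearMap.proj_apply, Pi.single_apply, smul_eq_mul, mul_ite, mul_one, mul_zero,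
    sum_ite_eq', mem_univ, if_true]
  refine sum_congr rfl fun j _ => ?_
  field_simp

theorem mul_potentialGrad (hP : ∀ i j, 0 < P i j) (hc : ∀ i, 0 < c i) (i : ι) :
    c i * potentialGrad P α c i = ∑ j, columnPowSum P α c j ^ (α⁻¹ - 1) * (P i j * c i) ^ α := by
  rw [potentialGrad, mul_sum]
  refine sum_congr rfl fun j _ => ?_
  rw [rpow_sub_one (mul_pos (hP i j) (hc i)).ne']
  field_simp [(hP i j).ne', (hc i).ne']

theorem sum_mul_potentialGrad (hP : ∀ i j, 0 < P i j) (hc : c ∈ stdSimplex ℝ ι)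
    (hcpos : ∀ i, 0 < c i) : ∑ i, c i * potentialGrad P α c i = potential P α c := by
  simp_rw [mul_potentialGrad hP hcpos]
  rw [sum_comm, potential]
  refine sum_congr rfl fun j _ => ?_
  rw [← mul_sum, rpow_sub_one (columnPowSum_pos hP hc j).ne']
  exact div_mul_cancel₀ _ (columnPowSum_pos hP hc j).ne'

theorem potentialGrad_eq_zero (hα : 1 < α) {i : ι} (hci : c i = 0) : potentialGrad P α c i = 0 :=
  sum_eq_zero fun j _ => by rw [hci, mul_zero, zero_rpow (by linarith), zero_mul, mul_zero]

theorem potentialGrad_pos [Nonempty κ] (hP : ∀ i j, 0 < P i j) (hc : c ∈ stdSimplex ℝ ι) {i : ι}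
    (hci : 0 < c i) : 0 < potentialGrad P α c i :=
  sum_pos (fun j _ => mul_pos (rpow_pos_of_pos (columnPowSum_pos hP hc j) _)
    (mul_pos (rpow_pos_of_pos (mul_pos (hP i j) hci) _) (hP i j))) univ_nonempty

structure IsBalanced (P : ι → κ → ℝ) (α : ℝ) (c : ι → ℝ) : Prop where
  mem_stdSimplex : c ∈ stdSimplex ℝ ι
  pos : ∀ i, 0 < c i
  potentialGrad_eq : ∀ i, potentialGrad P α c i = potential P α c

theorem exists_isBalanced [Nonempty ι] [Nonempty κ] (hP : ∀ i j, 0 < P i j) (hα : 1 < α) :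
    ∃ c, IsBalanced P α c := by
  classical
  obtain ⟨c, hc, hmin⟩ := (isCompact_stdSimplex ℝ ι).exists_isMinOn
    ⟨_, single_mem_stdSimplex ℝ (Classical.arbitrary ι)⟩
    (continuous_potential P (by linarith)).continuousOn
  have hD : ∀ j, columnPowSum P α c j ≠ 0 := fun j => (columnPowSum_pos hP hc j).ne'
  have hle : ∀ i k, 0 < c k → potentialGrad P α c k ≤ potentialGrad P α c i := fun i k hk => by
    simpa only [fderiv_potential_single P hα.le hD] using
      hmin.fderiv_single_le_of_stdSimplex hc (hasFDerivAt_potential P hα.le hD).differentiableAt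
        hk i
  have hpos : ∀ i, 0 < c i := fun i => (hc.1 i).lt_of_ne' fun hci => by
    obtain ⟨k, hk⟩ := exists_pos_of_mem_stdSimplex hc
    have := hle i k hk
    rw [potentialGrad_eq_zero hα hci] at this
    exact this.not_gt (potentialGrad_pos hP hc hk)
  have hG : ∀ i k, potentialGrad P α c i = potentialGrad P α c k := fun i k =>
    le_antisymm (hle k i (hpos i)) (hle i k (hpos k))
  refine ⟨c, hc, hpos, fun i => ?_⟩
  calc potentialGrad P α c i = ∑ k, c k * potentialGrad P α c i := by
        rw [← sum_mul, hc.2, one_mul]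
    _ = ∑ k, c k * potentialGrad P α c k := sum_congr rfl fun k _ => by rw [hG i k]
    _ = potential P α c := sum_mul_potentialGrad hP hc hpos

theorem IsBalanced.rpow_inv_sub_one_le [Nonempty κ] (hc : IsBalanced P α c) (hα : 1 < α)
    {b B : ℝ} (hb : 0 < b) (hbP : ∀ i j, b ≤ P i j) (hPB : ∀ i j, P i j ≤ B) (i : ι) :
    (b / (Fintype.card ι * B)) ^ (α - 1)⁻¹ ≤ c i ^ α⁻¹ := by
  have hP : ∀ i j, 0 < P i j := fun i j => hb.trans_le (hbP i j)
  have hα0 : 0 < α := by linarith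
  have hcard : (0 : ℝ) < Fintype.card ι := Nat.cast_pos.2 (Fintype.card_pos_iff.2 ⟨i⟩)
  have hB : 0 < B := (hP i (Classical.arbitrary κ)).trans_le (hPB _ _)
  set r := b / (Fintype.card ι * B) with hr_def
  have hr : 0 < r := by positivity
  obtain ⟨k, -, hk⟩ : ∃ k ∈ univ, (Fintype.card ι : ℝ)⁻¹ ≤ c k := by
    refine exists_le_of_sum_le ⟨i, mem_univ i⟩ ?_
    simp [hc.mem_stdSimplex.2, mul_inv_cancel₀ hcard.ne']
  -- compare `potential = potentialGrad i` termwise over the items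
  obtain ⟨j, -, hj⟩ : ∃ j ∈ univ, columnPowSum P α c j ^ (α⁻¹ - 1) * columnPowSum P α c j ≤
      columnPowSum P α c j ^ (α⁻¹ - 1) * ((P i j * c i) ^ (α - 1) * P i j) := by
    refine exists_le_of_sum_le univ_nonempty (le_of_eq ?_)
    rw [← potentialGrad, hc.potentialGrad_eq, potential]
    refine sum_congr rfl fun j _ => ?_
    rw [rpow_sub_one (columnPowSum_pos hP hc.mem_stdSimplex j).ne']
    exact div_mul_cancel₀ _ (columnPowSum_pos hP hc.mem_stdSimplex j).ne'
  have hD := le_of_mul_le_mul_left hj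
    (rpow_pos_of_pos (columnPowSum_pos hP hc.mem_stdSimplex j) _)
  have hrk : r * P i j ≤ P k j * c k :=
    calc r * P i j = b * (Fintype.card ι : ℝ)⁻¹ * (P i j / B) := by rw [hr_def]; field_simp
      _ ≤ P k j * c k * 1 :=
        mul_le_mul (mul_le_mul (hbP k j) hk (by positivity) (hP k j).le)
          ((div_le_one hB).2 (hPB i j)) (div_pos (hP i j) hB).le
          (mul_pos (hP k j) (hc.pos k)).le
      _ = P k j * c k := mul_one _
  have hPij := (hP i j).ne'
  have key : (r * P i j) ^ α ≤ c i ^ (α - 1) * P i j ^ α :=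
    calc (r * P i j) ^ α ≤ (P k j * c k) ^ α := rpow_le_rpow (mul_pos hr (hP i j)).le hrk hα0.le
      _ ≤ columnPowSum P α c j :=
        rpow_le_columnPowSum (fun i j => (hP i j).le) hc.mem_stdSimplex.1 k j
      _ ≤ (P i j * c i) ^ (α - 1) * P i j := hD
      _ = c i ^ (α - 1) * P i j ^ α := by
        rw [mul_rpow (hP i j).le (hc.pos i).le, rpow_sub_one hPij]
        field_simp
  have hrc : r ^ α ≤ c i ^ (α - 1) := by
    rw [mul_rpow hr.le (hP i j).le] at key
    exact le_of_mul_le_mul_right key (rpow_pos_of_pos (hP i j) α)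
  have hroot := rpow_le_rpow (by positivity) hrc (by positivity : 0 ≤ (α * (α - 1))⁻¹)
  rw [← rpow_mul hr.le, ← rpow_mul (hc.pos i).le] at hroot
  have hα1 : α - 1 ≠ 0 := by linarith
  convert hroot using 2 <;> field_simp

/-- Under the weights `columnPowSum P α c j ^ α⁻¹ / potential P α c` the shares
`(P i j * c i) ^ α / columnPowSum P α c j` of agent `i` have mean `c i` (this is
`potentialGrad_eq`) and `(1 + α⁻¹)`-th moment `c i * load / potential`; apply the power-mean
inequality. -/
theorem IsBalanced.potential_mul_rpow_inv_le [Nonempty κ] (hc : IsBalanced P α c)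
    (hP : ∀ i j, 0 < P i j) (hα : 0 < α) (i : ι) :
    potential P α c * c i ^ α⁻¹ ≤ ∑ j, (P i j * c i) ^ α / columnPowSum P α c j * P i j := by
  have hΦ : 0 < potential P α c := potential_pos hP hc.mem_stdSimplex
  have hD : ∀ j, 0 < columnPowSum P α c j := columnPowSum_pos hP hc.mem_stdSimplex
  have hPc : ∀ j, 0 < P i j * c i := fun j => mul_pos (hP i j) (hc.pos i)
  set x : κ → ℝ := fun j => (P i j * c i) ^ α / columnPowSum P α c j
  set μ : κ → ℝ := fun j => columnPowSum P α c j ^ α⁻¹ / potential P α c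
  have hx : ∀ j, 0 ≤ x j := fun j => div_nonneg (rpow_nonneg (hPc j).le α) (hD j).le
  have hμ : ∑ j, μ j = 1 := by rw [← sum_div]; exact div_self hΦ.ne'
  have hmean : ∑ j, μ j * x j = c i := by
    have hterm : ∀ j, μ j * x j =
        columnPowSum P α c j ^ (α⁻¹ - 1) * (P i j * c i) ^ α / potential P α c := fun j => by
      rw [rpow_sub_one (hD j).ne']
      ring
    rw [sum_congr rfl fun j _ => hterm j, ← sum_div, ← mul_potentialGrad hP hc.pos,
      hc.potentialGrad_eq, mul_div_cancel_right₀ _ hΦ.ne']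
  have hmoment : ∑ j, μ j * x j ^ (1 + α⁻¹) =
      c i * ((∑ j, x j * P i j) / potential P α c) := by
    have hterm : ∀ j, μ j * x j ^ (1 + α⁻¹) = c i * (x j * P i j) / potential P α c := fun j => by
      have hroot : columnPowSum P α c j ^ α⁻¹ * x j ^ α⁻¹ = P i j * c i := by
        rw [← mul_rpow (hD j).le (hx j), mul_div_cancel₀ _ (hD j).ne',
          rpow_rpow_inv (hPc j).le hα.ne']
      calc μ j * x j ^ (1 + α⁻¹)
          = x j * (columnPowSum P α c j ^ α⁻¹ * x j ^ α⁻¹) / potential P α c := by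
            rw [rpow_one_add' (hx j) (by positivity)]; ring
        _ = c i * (x j * P i j) / potential P α c := by rw [hroot]; ring
    rw [sum_congr rfl fun j _ => hterm j, ← sum_div, ← mul_sum, mul_div_assoc]
  have hjensen := rpow_arith_mean_le_arith_mean_rpow univ μ x
    (fun j _ => div_nonneg (rpow_nonneg (hD j).le _) hΦ.le) hμ (fun j _ => hx j)
    (le_add_of_nonneg_right (inv_nonneg.2 hα.le))
  rw [hmean, hmoment, rpow_one_add' (hc.pos i).le (by positivity)] at hjensen
  rw [← le_div_iff₀' hΦ]
  exact le_of_mul_le_mul_left hjensen (hc.pos i)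

end Potential

section Allocation

variable {m n : ℕ} {P : Fin m → Fin n → ℝ} {α : ℝ} {c : Fin m → ℝ}

theorem iInf_loadX_le_potential (hP : ∀ i j, 0 ≤ P i j) (hα : 0 < α)
    (hc : c ∈ stdSimplex ℝ (Fin m)) {X : Fin m → Fin n → ℝ} (hX : Feasible X) :
    ⨅ i, loadX P X i ≤ potential P α c :=
  calc ⨅ i, loadX P X i = ∑ i, c i * ⨅ i', loadX P X i' := by
        rw [← sum_mul, hc.2, one_mul]
    _ ≤ ∑ i, c i * loadX P X i := by
        gcongr with i
        · exact hc.1 i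
        · exact ciInf_le (Finite.bddBelow_range _) i
    _ = ∑ j, ∑ i, X i j * (P i j * c i) := by
        simp_rw [loadX, mul_sum]
        rw [sum_comm]
        exact sum_congr rfl fun j _ => sum_congr rfl fun i _ => by ring
    _ ≤ ∑ j, ∑ i, X i j * columnPowSum P α c j ^ α⁻¹ := by
        gcongr with j _ i
        · exact (hX.1 i j).1
        · exact mul_le_columnPowSum_rpow_inv hP hc.1 hα i j
    _ = potential P α c := by simp_rw [← sum_mul, hX.2, one_mul]; rfl

theorem SNT_le_potential (hP : ∀ i j, 0 ≤ P i j) (hα : 0 < α) (hc : c ∈ stdSimplex ℝ (Fin m)) :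
    SNT P ≤ potential P α c := by
  refine Real.sSup_le ?_ (potential_nonneg hP hc.1)
  rintro _ ⟨X, hX, rfl⟩
  exact iInf_loadX_le_potential hP hα hc hX

theorem SNT_nonneg (hP : ∀ i j, 0 ≤ P i j) : 0 ≤ SNT P := by
  refine Real.sSup_nonneg ?_
  rintro _ ⟨X, hX, rfl⟩
  exact Real.iInf_nonneg fun i => sum_nonneg fun j _ => mul_nonneg (hX.1 i j).1 (hP i j)

theorem SNT_nonpos_of_fin_zero (P : Fin m → Fin 0 → ℝ) : SNT P ≤ 0 :=
  Real.sSup_le (by rintro _ ⟨X, -, rfl⟩; simp [loadX]) le_rfl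

theorem epLoad_rpow (hP : ∀ i j, 0 ≤ P i j) (hc : ∀ i, 0 ≤ c i) (i : Fin m) :
    epLoad P α (fun t => c t ^ α) i =
      ∑ j, (P i j * c i) ^ α / columnPowSum P α c j * P i j := by
  simp only [epLoad, epAlloc, columnPowSum, mul_rpow (hP _ _) (hc _)]

end Allocation

theorem stmt11 {m n : ℕ} (hm : 0 < m) (P : Fin m → Fin n → ℝ)
    (hP : ∀ i j, 0 < P i j) (ε : ℝ) (hε : 0 < ε) :
    ∃ (α : ℝ) (w : Fin m → ℝ), (∀ i, 0 < w i) ∧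
      ∀ i, (1 - ε) * SNT P ≤ epLoad P α w i := by
  have hP0 : ∀ i j, 0 ≤ P i j := fun i j => (hP i j).le
  have : Nonempty (Fin m) := ⟨⟨0, hm⟩⟩
  obtain rfl | hn := n.eq_zero_or_pos
  · have hSNT : SNT P = 0 := le_antisymm (SNT_nonpos_of_fin_zero P) (SNT_nonneg hP0)
    exact ⟨1, fun _ => 1, fun _ => one_pos, fun i => by simp [hSNT, epLoad]⟩
  have : Nonempty (Fin n) := ⟨⟨0, hn⟩⟩
  obtain ⟨⟨i₀, j₀⟩, hmin⟩ := Finite.exists_min fun p : Fin m × Fin n => P p.1 p.2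
  obtain ⟨⟨i₁, j₁⟩, hmax⟩ := Finite.exists_max fun p : Fin m × Fin n => P p.1 p.2
  obtain ⟨α, hα, hαε⟩ := exists_one_lt_and_lt_rpow_inv_sub_one
    (r := P i₀ j₀ / (m * P i₁ j₁)) (by have := hP i₀ j₀; have := hP i₁ j₁; positivity)
    (by linarith : 1 - ε < 1)
  obtain ⟨c, hc⟩ := exists_isBalanced hP hα
  refine ⟨α, fun t => c t ^ α, fun t => rpow_pos_of_pos (hc.pos t) α, fun i => ?_⟩
  have hci : 1 - ε ≤ c i ^ α⁻¹ := hαε.le.trans <| by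
    simpa using hc.rpow_inv_sub_one_le hα (hP i₀ j₀) (fun i j => hmin (i, j))
      (fun i j => hmax (i, j)) i
  calc (1 - ε) * SNT P ≤ c i ^ α⁻¹ * potential P α c :=
        mul_le_mul hci (SNT_le_potential hP0 (by linarith) hc.mem_stdSimplex) (SNT_nonneg hP0)
          (rpow_nonneg (hc.pos i).le _)
    _ ≤ epLoad P α (fun t => c t ^ α) i := by
        rw [mul_comm, epLoad_rpow hP0 fun t => (hc.pos t).le]
        exact hc.potential_mul_rpow_inv_le hP (by linarith) i
end

section
/- Fix a weight matrix P ∈ ℝ_{>0}^{m×n}. Suppose L : ℝ → ℝ_{>0} is a function such that for every α ∈ ℝ there exists w_α ∈ ℝ_{>0}^m with ℓ_i(P,α,w_α) = L(α) for every i ∈ [m]. Then lim_{α→∞} L(α) = ℓ^SNT(P). -/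
open Finset

/-- Core power-mean inequality:
`m^(-1/α) * (max a) * ∑ a^α ≤ ∑ a^(α+1)` for positive `a` and `α ≥ 1`. -/
lemma key_ineq {m : ℕ} (hm : 0 < m) (a : Fin m → ℝ) (ha : ∀ i, 0 < a i)
    (he : (univ : Finset (Fin m)).Nonempty)
    {α : ℝ} (hα : 1 ≤ α) :
    (m : ℝ) ^ (-(1/α)) * univ.sup' he a * (∑ i, a i ^ α)
      ≤ ∑ i, a i ^ (α + 1) := by
  have hα0 : (0:ℝ) < α := lt_of_lt_of_le one_pos hα
  set M := univ.sup' he a with hM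
  obtain ⟨i0, -, hi0⟩ := Finset.exists_mem_eq_sup' he a
  have hMpos : 0 < M := by rw [hM, hi0]; exact ha i0
  set S := ∑ i, a i ^ α with hS
  have hSpos : 0 < S :=
    Finset.sum_pos (fun i _ => Real.rpow_pos_of_pos (ha i) α) he
  have hmR : (0:ℝ) < m := by exact_mod_cast hm
  have hp : (1:ℝ) ≤ 1 + 1/α := by
    have h1 : 0 < 1/α := by positivity
    linarith
  -- Jensen's inequality
  have hJ := Real.rpow_arith_mean_le_arith_mean_rpow univ
      (fun _ : Fin m => 1/(m:ℝ)) (fun i => a i ^ α)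
      (fun i _ => by positivity)
      (by rw [Finset.sum_const, Finset.card_univ, Fintype.card_fin, nsmul_eq_mul]
          field_simp)
      (fun i _ => (Real.rpow_pos_of_pos (ha i) α).le) hp
  have hR : ∀ i : Fin m, (a i ^ α) ^ (1 + 1/α) = a i ^ (α + 1) := by
    intro i
    rw [← Real.rpow_mul (ha i).le]
    congr 1
    field_simp
  have hJ' : ((1/(m:ℝ)) * S) ^ (1 + 1/α) ≤ (1/(m:ℝ)) * ∑ i, a i ^ (α + 1) := by
    calc ((1/(m:ℝ)) * S) ^ (1 + 1/α) = (∑ i, (1/(m:ℝ)) * a i ^ α) ^ (1 + 1/α) := by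
          rw [hS, Finset.mul_sum]
      _ ≤ ∑ i, (1/(m:ℝ)) * (a i ^ α) ^ (1 + 1/α) := hJ
      _ = (1/(m:ℝ)) * ∑ i, a i ^ (α + 1) := by
          rw [Finset.mul_sum]
          exact Finset.sum_congr rfl fun i _ => by rw [hR i]
  -- S^(1/α) ≥ M
  have hMS : M ^ α ≤ S := by
    rw [hM, hi0, hS]
    exact Finset.single_le_sum (fun i _ => (Real.rpow_pos_of_pos (ha i) α).le)
      (Finset.mem_univ i0)
  have hMS' : M ≤ S ^ (1/α : ℝ) := by
    have := Real.rpow_le_rpow (Real.rpow_pos_of_pos hMpos α).le hMS (by positivity : (0:ℝ) ≤ 1/α)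
    rwa [← Real.rpow_mul hMpos.le, mul_one_div, div_self hα0.ne', Real.rpow_one] at this
  -- assemble
  have hmain : (m:ℝ) ^ (-(1/α)) * (S ^ ((1:ℝ) + 1/α)) ≤ ∑ i, a i ^ (α + 1) := by
    have hml : ((1/(m:ℝ)) * S) ^ ((1:ℝ) + 1/α)
        = (1/(m:ℝ)) ^ ((1:ℝ) + 1/α) * S ^ ((1:ℝ) + 1/α) :=
      Real.mul_rpow (by positivity) hSpos.le
    have h2 : (m:ℝ) * ((1/(m:ℝ)) ^ ((1:ℝ) + 1/α)) = (m:ℝ) ^ (-(1/α)) := by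
      rw [one_div, Real.inv_rpow hmR.le, ← Real.rpow_neg hmR.le]
      nth_rewrite 1 [← Real.rpow_one (m:ℝ)]
      rw [← Real.rpow_add hmR]
      congr 1
      ring
    calc (m:ℝ) ^ (-(1/α)) * (S ^ ((1:ℝ) + 1/α))
        = (m:ℝ) * (((1/(m:ℝ)) * S) ^ ((1:ℝ) + 1/α)) := by
          rw [hml, ← mul_assoc, h2]
      _ ≤ (m:ℝ) * ((1/(m:ℝ)) * ∑ i, a i ^ (α + 1)) := by
          exact mul_le_mul_of_nonneg_left hJ' hmR.le
      _ = ∑ i, a i ^ (α + 1) := by field_simp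
  refine le_trans ?_ hmain
  have hSsplit : S ^ ((1:ℝ) + 1/α) = S * S ^ (1/α : ℝ) := by
    rw [Real.rpow_add hSpos, Real.rpow_one]
  rw [hSsplit]
  have : M * S ≤ S * S ^ (1/α : ℝ) := by
    calc M * S ≤ S ^ (1/α : ℝ) * S := by
          exact mul_le_mul_of_nonneg_right hMS' hSpos.le
      _ = S * S ^ (1/α : ℝ) := mul_comm _ _
  calc (m:ℝ) ^ (-(1/α)) * M * S = (m:ℝ) ^ (-(1/α)) * (M * S) := mul_assoc _ _ _
    _ ≤ (m:ℝ) ^ (-(1/α)) * (S * S ^ (1/α : ℝ)) := by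
        exact mul_le_mul_of_nonneg_left this (Real.rpow_nonneg hmR.le _)

/-- Weak LP duality for the Santa Claus value. -/
lemma dual_bound {m n : ℕ} (hm : 0 < m) (P : Fin m → Fin n → ℝ)
    (hP : ∀ i j, 0 < P i j) (he : (univ : Finset (Fin m)).Nonempty)
    (u : Fin m → ℝ) (hu : ∀ i, 0 < u i) :
    (∑ i, u i) * SNT P ≤ ∑ j, univ.sup' he (fun i => u i * P i j) := by
  have hU : 0 < ∑ i, u i := Finset.sum_pos (fun i _ => hu i) he
  set D := ∑ j, univ.sup' he (fun i => u i * P i j) with hD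
  have hDnn : 0 ≤ D := by
    refine Finset.sum_nonneg fun j _ => ?_
    obtain ⟨i0⟩ := univ_nonempty_iff.mp he
    exact le_trans (mul_pos (hu i0) (hP i0 j)).le
      (Finset.le_sup' (fun i => u i * P i j) (Finset.mem_univ i0))
  have hSNT : SNT P ≤ D / (∑ i, u i) := by
    apply Real.sSup_le
    · rintro t ⟨X, hX, rfl⟩
      rw [le_div_iff₀ hU]
      have hinf : ∀ i, (⨅ i', loadX P X i') ≤ loadX P X i := fun i =>
        ciInf_le (Finite.bddBelow_range _) i
      calc (⨅ i, loadX P X i) * (∑ i, u i) = ∑ i, u i * (⨅ i', loadX P X i') := by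
            rw [mul_comm, Finset.sum_mul]
        _ ≤ ∑ i, u i * loadX P X i :=
            Finset.sum_le_sum fun i _ =>
              mul_le_mul_of_nonneg_left (hinf i) (hu i).le
        _ = ∑ j, ∑ i, X i j * (u i * P i j) := by
            rw [Finset.sum_comm]
            refine Finset.sum_congr rfl fun i _ => ?_
            rw [loadX, Finset.mul_sum]
            exact Finset.sum_congr rfl fun j _ => by ring
        _ ≤ ∑ j, univ.sup' he (fun i => u i * P i j) := by
            refine Finset.sum_le_sum fun j _ => ?_
            calc ∑ i, X i j * (u i * P i j)
                ≤ ∑ i, X i j * univ.sup' he (fun i' => u i' * P i' j) :=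
                  Finset.sum_le_sum fun i _ =>
                    mul_le_mul_of_nonneg_left
                      (Finset.le_sup' (fun i' => u i' * P i' j) (Finset.mem_univ i))
                      (hX.1 i j).1
              _ = univ.sup' he (fun i' => u i' * P i' j) := by
                  rw [← Finset.sum_mul, hX.2 j, one_mul]
    · positivity
  calc (∑ i, u i) * SNT P ≤ (∑ i, u i) * (D / (∑ i, u i)) :=
        mul_le_mul_of_nonneg_left hSNT hU.le
    _ = D := by field_simp

theorem stmt12 {m n : ℕ} (hm : 0 < m) (P : Fin m → Fin n → ℝ)
    (hP : ∀ i j, 0 < P i j)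
    (L : ℝ → ℝ) (hLpos : ∀ α, 0 < L α)
    (hcanon : ∀ α : ℝ, ∃ w : Fin m → ℝ, (∀ i, 0 < w i) ∧
      ∀ i, epLoad P α w i = L α) :
    Filter.Tendsto L Filter.atTop (nhds (SNT P)) := by
  have hFm : Nonempty (Fin m) := ⟨⟨0, hm⟩⟩
  have he : (univ : Finset (Fin m)).Nonempty := univ_nonempty_iff.mpr hFm
  have hmR : (0:ℝ) < m := by exact_mod_cast hm
  -- Upper bound: L α ≤ SNT P for every α.
  have hub : ∀ α : ℝ, L α ≤ SNT P := by
    intro α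
    obtain ⟨w, hw, hload⟩ := hcanon α
    have hS : ∀ j, 0 < ∑ i', P i' j ^ α * w i' := fun j =>
      Finset.sum_pos (fun i _ => mul_pos (Real.rpow_pos_of_pos (hP i j) α) (hw i)) he
    have hfeas : Feasible (epAlloc P α w) := by
      constructor
      · intro i j
        constructor
        · exact div_nonneg
            (mul_pos (Real.rpow_pos_of_pos (hP i j) α) (hw i)).le (hS j).le
        · rw [epAlloc, div_le_one (hS j)]
          exact Finset.single_le_sum
            (fun i' _ => (mul_pos (Real.rpow_pos_of_pos (hP i' j) α) (hw i')).le)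
            (Finset.mem_univ i)
      · intro j
        simp only [epAlloc]
        rw [← Finset.sum_div, div_self (hS j).ne']
    have hloads : ∀ i, loadX P (epAlloc P α w) i = L α := fun i => hload i
    have hmem : L α ∈ { t | ∃ X, Feasible X ∧ t = ⨅ i, loadX P X i } := by
      refine ⟨epAlloc P α w, hfeas, ?_⟩
      rw [show (loadX P (epAlloc P α w)) = (fun _ => L α) from funext hloads]
      exact ciInf_const.symm
    -- bounded above
    have hbdd : BddAbove { t | ∃ X, Feasible X ∧ t = ⨅ i, loadX P X i } := by
      obtain ⟨i0⟩ := hFm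
      refine ⟨∑ j, univ.sup' he (fun i => P i j), ?_⟩
      rintro t ⟨X, hX, rfl⟩
      calc (⨅ i, loadX P X i) ≤ loadX P X i0 := ciInf_le (Finite.bddBelow_range _) i0
        _ ≤ ∑ j, univ.sup' he (fun i => P i j) := by
            refine Finset.sum_le_sum fun j _ => ?_
            calc X i0 j * P i0 j ≤ 1 * P i0 j :=
                  mul_le_mul_of_nonneg_right (hX.1 i0 j).2 (hP i0 j).le
              _ = P i0 j := one_mul _
              _ ≤ univ.sup' he (fun i => P i j) := Finset.le_sup' (fun i => P i j) (Finset.mem_univ i0)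
    exact le_csSup hbdd hmem
  -- Lower bound for α ≥ 1.
  have hlb : ∀ α : ℝ, 1 ≤ α → (m:ℝ) ^ (-(1/α)) * SNT P ≤ L α := by
    intro α hα
    have hα0 : (0:ℝ) < α := lt_of_lt_of_le one_pos hα
    obtain ⟨w, hw, hload⟩ := hcanon α
    set u : Fin m → ℝ := fun i => w i ^ (1/α : ℝ) with hu_def
    have hu : ∀ i, 0 < u i := fun i => Real.rpow_pos_of_pos (hw i) _
    have hwu : ∀ i, w i = u i ^ α := by
      intro i
      rw [hu_def, ← Real.rpow_mul (hw i).le, one_div, inv_mul_cancel₀ hα0.ne',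
        Real.rpow_one]
    set a : Fin m → Fin n → ℝ := fun i j => u i * P i j with ha_def
    have hapos : ∀ i j, 0 < a i j := fun i j => mul_pos (hu i) (hP i j)
    have hwa : ∀ i j, P i j ^ α * w i = a i j ^ α := by
      intro i j
      rw [hwu i, ha_def, Real.mul_rpow (hu i).le (hP i j).le]
      ring
    have hSa : ∀ j, (∑ i', P i' j ^ α * w i') = ∑ i', a i' j ^ α := fun j =>
      Finset.sum_congr rfl fun i _ => hwa i j
    have hSpos : ∀ j, 0 < ∑ i', a i' j ^ α := fun j =>
      Finset.sum_pos (fun i _ => Real.rpow_pos_of_pos (hapos i j) α) he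
    have hU : 0 < ∑ i, u i := Finset.sum_pos (fun i _ => hu i) he
    -- key identity
    have hid : (∑ i, u i) * L α = ∑ j, (∑ i, a i j ^ (α + 1)) / (∑ i', a i' j ^ α) := by
      calc (∑ i, u i) * L α = ∑ i, u i * L α := by rw [Finset.sum_mul]
        _ = ∑ i, u i * epLoad P α w i :=
            Finset.sum_congr rfl fun i _ => by rw [hload i]
        _ = ∑ i, ∑ j, a i j ^ (α + 1) / (∑ i', a i' j ^ α) := by
            refine Finset.sum_congr rfl fun i _ => ?_
            rw [epLoad, Finset.mul_sum]
            refine Finset.sum_congr rfl fun j _ => ?_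
            rw [epAlloc, hSa j, hwa i j]
            rw [Real.rpow_add_one (hapos i j).ne']
            rw [ha_def]
            field_simp
        _ = ∑ j, ∑ i, a i j ^ (α + 1) / (∑ i', a i' j ^ α) := Finset.sum_comm
        _ = ∑ j, (∑ i, a i j ^ (α + 1)) / (∑ i', a i' j ^ α) :=
            Finset.sum_congr rfl fun j _ => (Finset.sum_div _ _ _).symm
    -- apply key inequality per item
    have hkey : ∀ j, (m:ℝ) ^ (-(1/α)) * univ.sup' he (fun i => a i j)
        ≤ (∑ i, a i j ^ (α + 1)) / (∑ i', a i' j ^ α) := by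
      intro j
      rw [le_div_iff₀ (hSpos j)]
      exact key_ineq hm (fun i => a i j) (fun i => hapos i j) he hα
    have h1 : (m:ℝ) ^ (-(1/α)) * ((∑ i, u i) * SNT P) ≤ (∑ i, u i) * L α := by
      calc (m:ℝ) ^ (-(1/α)) * ((∑ i, u i) * SNT P)
          ≤ (m:ℝ) ^ (-(1/α)) * ∑ j, univ.sup' he (fun i => u i * P i j) :=
            mul_le_mul_of_nonneg_left (dual_bound hm P hP he u hu)
              (Real.rpow_nonneg hmR.le _)
        _ = ∑ j, (m:ℝ) ^ (-(1/α)) * univ.sup' he (fun i => a i j) := by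
            rw [Finset.mul_sum]
        _ ≤ ∑ j, (∑ i, a i j ^ (α + 1)) / (∑ i', a i' j ^ α) :=
            Finset.sum_le_sum fun j _ => hkey j
        _ = (∑ i, u i) * L α := hid.symm
    have h2 : (∑ i, u i) * ((m:ℝ) ^ (-(1/α)) * SNT P) ≤ (∑ i, u i) * L α := by
      calc (∑ i, u i) * ((m:ℝ) ^ (-(1/α)) * SNT P)
          = (m:ℝ) ^ (-(1/α)) * ((∑ i, u i) * SNT P) := by ring
        _ ≤ (∑ i, u i) * L α := h1
    exact le_of_mul_le_mul_left h2 hU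
  -- squeeze
  have hlow : Filter.Tendsto (fun α : ℝ => (m:ℝ) ^ (-(1/α)) * SNT P)
      Filter.atTop (nhds (SNT P)) := by
    have hexp : Filter.Tendsto (fun α : ℝ => -(1/α)) Filter.atTop (nhds 0) := by
      have := tendsto_inv_atTop_zero (𝕜 := ℝ)
      have h' : Filter.Tendsto (fun α : ℝ => 1/α) Filter.atTop (nhds 0) := by
        simpa [one_div] using this
      simpa using h'.neg
    have hc : Filter.Tendsto (fun α : ℝ => (m:ℝ) ^ (-(1/α))) Filter.atTop
        (nhds ((m:ℝ) ^ (0:ℝ))) :=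
      ((Real.continuousAt_const_rpow hmR.ne').tendsto).comp hexp
    rw [Real.rpow_zero] at hc
    have := hc.mul_const (SNT P)
    simpa using this
  refine tendsto_of_tendsto_of_tendsto_of_le_of_le' hlow tendsto_const_nhds ?_ ?_
  · filter_upwards [Filter.eventually_ge_atTop (1:ℝ)] with α hα
    exact hlb α hα
  · filter_upwards with α
    exact hub α
end

section
/- Fix a weight matrix P ∈ ℝ_{>0}^{m×n}. If X is a feasible assignment attaining the optimal makespan, i.e., max_{i∈[m]} ℓ_i(P,X) = ℓ^MKS(P), then ℓ_i(P,X) = ℓ^MKS(P) for every agent i ∈ [m]. -/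
open Finset

lemma loadX_nonneg {m n : ℕ} (P X : Fin m → Fin n → ℝ)
    (hP : ∀ i j, 0 < P i j) (hX : Feasible X) (i : Fin m) :
    0 ≤ loadX P X i := by
  apply Finset.sum_nonneg
  intro j _
  exact mul_nonneg (hX.1 i j).1 (hP i j).le

theorem stmt14 {m n : ℕ} (hm : 0 < m) (P : Fin m → Fin n → ℝ)
    (hP : ∀ i j, 0 < P i j)
    (X : Fin m → Fin n → ℝ) (hX : Feasible X)
    (hopt : (⨆ i, loadX P X i) = MKS P) :
    ∀ i, loadX P X i = MKS P := by
  haveI : Nonempty (Fin m) := ⟨⟨0, hm⟩⟩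
  set T : ℝ := ⨆ i, loadX P X i with hT
  intro i0
  by_contra hne
  have hbdd : ∀ (Y : Fin m → Fin n → ℝ), BddAbove (Set.range (loadX P Y)) :=
    fun Y => (Set.finite_range _).bddAbove
  have hleT : ∀ i, loadX P X i ≤ T := fun i => le_ciSup (hbdd X) i
  have hlt : loadX P X i0 < T := by
    rcases lt_or_eq_of_le (hleT i0) with h | h
    · exact h
    · exact absurd (h.trans hopt) hne
  have hl0 : 0 ≤ loadX P X i0 := loadX_nonneg P X hP hX i0
  have hT0 : 0 < T := lt_of_le_of_lt hl0 hlt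
  set S0 : ℝ := ∑ j, P i0 j with hS0
  have hS0nn : 0 ≤ S0 := Finset.sum_nonneg fun j _ => (hP i0 j).le
  set δ : ℝ := min 1 ((T - loadX P X i0) / (2 * (S0 + 1))) with hδ
  have hδ0 : 0 < δ := by
    apply lt_min one_pos
    apply div_pos (by linarith) (by linarith)
  have hδ1 : δ ≤ 1 := min_le_left _ _
  have hδ2 : δ ≤ (T - loadX P X i0) / (2 * (S0 + 1)) := min_le_right _ _
  have hδ2' : δ * (2 * (S0 + 1)) ≤ T - loadX P X i0 := by
    rw [← le_div_iff₀ (by linarith)]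
    exact hδ2
  set Y : Fin m → Fin n → ℝ :=
    fun i j => (1 - δ) * X i j + (if i = i0 then δ else 0) with hY
  have hYfeas : Feasible Y := by
    constructor
    · intro i j
      have h1 := (hX.1 i j).1
      have h2 := (hX.1 i j).2
      have hd : (0 : ℝ) ≤ 1 - δ := by linarith
      have hnn : 0 ≤ (1 - δ) * X i j := mul_nonneg hd h1
      have hub : (1 - δ) * X i j ≤ 1 - δ := by nlinarith
      constructor
      · simp only [hY]
        split <;> linarith
      · simp only [hY]
        split <;> linarith
    · intro j
      have hsum := hX.2 j
      simp only [hY]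
      rw [Finset.sum_add_distrib, ← Finset.mul_sum, hsum,
        Finset.sum_ite_eq' Finset.univ i0 (fun _ => δ)]
      simp
  have hloadY : ∀ i, loadX P Y i =
      (1 - δ) * loadX P X i + (if i = i0 then δ * S0 else 0) := by
    intro i
    by_cases h : i = i0
    · rw [h, if_pos rfl]
      have hv : ∀ j, Y i0 j = (1 - δ) * X i0 j + δ := fun j => by
        rw [hY]; simp
      unfold loadX
      rw [hS0, Finset.mul_sum, Finset.mul_sum, ← Finset.sum_add_distrib]
      refine Finset.sum_congr rfl fun j _ => ?_
      rw [hv j]; ring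
    · simp only [loadX, hY, if_neg h, Finset.mul_sum, add_zero]
      exact Finset.sum_congr rfl fun j _ => by ring
  have hYlt : ∀ i, loadX P Y i < T := by
    intro i
    rw [hloadY i]
    by_cases h : i = i0
    · rw [if_pos h, h]
      nlinarith [mul_nonneg hδ0.le hS0nn, mul_nonneg hδ0.le hl0]
    · rw [if_neg h]
      have hle := hleT i
      have hl0' : 0 ≤ loadX P X i := loadX_nonneg P X hP hX i
      nlinarith [mul_nonneg hδ0.le hl0', mul_pos hδ0 hT0]
  obtain ⟨imax, himax⟩ := exists_eq_ciSup_of_finite (f := loadX P Y)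
  have hsupY : (⨆ i, loadX P Y i) < T := himax ▸ hYlt imax
  have hmem : (⨆ i, loadX P Y i) ∈
      { t | ∃ Z, Feasible Z ∧ t = ⨆ i, loadX P Z i } :=
    ⟨Y, And.intro hYfeas rfl⟩
  have hbddbelow : BddBelow { t : ℝ | ∃ Z : Fin m → Fin n → ℝ,
      Feasible Z ∧ t = ⨆ i, loadX P Z i } := by
    refine ⟨0, ?_⟩
    rintro t ⟨Z, hZ, rfl⟩
    exact le_trans (loadX_nonneg P Z hP hZ ⟨0, hm⟩) (le_ciSup (hbdd Z) _)
  have h1 : MKS P ≤ ⨆ i, loadX P Y i := csInf_le hbddbelow hmem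
  have h2 : MKS P < T := lt_of_le_of_lt h1 hsupY
  rw [← hopt] at h2
  exact lt_irrefl _ h2
end

section
/- Fix a weight matrix P ∈ ℝ_{>0}^{m×n} and let X be a feasible assignment attaining the optimal makespan, i.e., max_{i∈[m]} ℓ_i(P,X) = ℓ^MKS(P). Then for every k ≥ 1, every sequence of agents i_1, …, i_k, i_{k+1} with i_{k+1} = i_1, and every sequence of items j_1, …, j_k such that x_{i_r, j_r} > 0 for all r ∈ [k], it holds that ∏_{r=1}^{k} (p_{i_{r+1}, j_r} / p_{i_r, j_r}) ≥ 1. -/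
open Finset

lemma load_nonneg {m n : ℕ} (P Y : Fin m → Fin n → ℝ) (hP : ∀ i j, 0 < P i j)
    (hY : ∀ i j, 0 ≤ Y i j) (i : Fin m) : 0 ≤ loadX P Y i :=
  Finset.sum_nonneg fun j _ => mul_nonneg (hY i j) (hP i j).le

lemma load_le_sup {m n : ℕ} (P Y : Fin m → Fin n → ℝ) (i : Fin m) :
    loadX P Y i ≤ ⨆ i, loadX P Y i :=
  le_ciSup (Set.Finite.bddAbove (Set.finite_range _)) i

lemma MKS_le {m n : ℕ} (hm : 0 < m) (P : Fin m → Fin n → ℝ) (hP : ∀ i j, 0 < P i j)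
    (Y : Fin m → Fin n → ℝ) (hY : Feasible Y) : MKS P ≤ ⨆ i, loadX P Y i := by
  refine csInf_le ⟨0, ?_⟩ ⟨Y, hY, rfl⟩
  · rintro t ⟨Z, hZ, rfl⟩
    have i0 : Fin m := ⟨0, hm⟩
    exact le_trans (load_nonneg P Z hP (fun i j => (hZ.1 i j).1) i0) (load_le_sup P Z i0)

lemma master {m n : ℕ} (hm : 0 < m) (P : Fin m → Fin n → ℝ) (hP : ∀ i j, 0 < P i j)
    (X : Fin m → Fin n → ℝ) (hX : Feasible X) (D : Fin m → Fin n → ℝ)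
    (hcol : ∀ j, ∑ i, D i j = 0)
    (hpos0 : ∀ i j, X i j = 0 → 0 ≤ D i j)
    (hg : ∀ i, (∑ j, D i j * P i j) < 0 ∨
      ((∑ j, D i j * P i j) = 0 ∧ loadX P X i < ⨆ i, loadX P X i)) :
    MKS P < ⨆ i, loadX P X i := by
  classical
  set T := ⨆ i, loadX P X i with hT
  -- find ε
  have hA : ∀ p : Fin m × Fin n, ∀ᶠ ε in nhdsWithin (0:ℝ) (Set.Ioi 0),
      0 ≤ X p.1 p.2 + ε * D p.1 p.2 := by
    rintro ⟨i, j⟩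
    by_cases hD : 0 ≤ D i j
    · refine eventually_nhdsWithin_of_forall fun ε hε => ?_
      exact add_nonneg (hX.1 i j).1 (mul_nonneg (le_of_lt hε) hD)
    · push_neg at hD
      have hXij : 0 < X i j := by
        rcases (hX.1 i j).1.lt_or_eq with h | h
        · exact h
        · exact absurd (hpos0 i j h.symm) (not_le.2 hD)
      have h1 : ∀ᶠ ε in nhdsWithin (0:ℝ) (Set.Ioi 0), ε < X i j / (-D i j) :=
        Filter.Eventually.filter_mono nhdsWithin_le_nhds
          (gt_mem_nhds (div_pos hXij (by linarith)))
      filter_upwards [h1] with ε hε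
      have hD' : 0 < -D i j := by linarith
      have := (lt_div_iff₀ hD').1 hε
      nlinarith
  have hB : ∀ i : Fin m, ∀ᶠ ε in nhdsWithin (0:ℝ) (Set.Ioi 0),
      loadX P X i + ε * (∑ j, D i j * P i j) < T := by
    intro i
    rcases hg i with h | ⟨h, hlt⟩
    · refine eventually_nhdsWithin_of_forall fun ε hε => ?_
      have : ε * (∑ j, D i j * P i j) < 0 := mul_neg_of_pos_of_neg hε h
      have hle : loadX P X i ≤ T := load_le_sup P X i
      linarith
    · refine eventually_nhdsWithin_of_forall fun ε hε => ?_
      rw [h]; simpa using hlt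
  obtain ⟨ε, ⟨hεA, hεB⟩, hεpos⟩ :=
    (((Filter.eventually_all.2 hA).and (Filter.eventually_all.2 hB)).and
      eventually_mem_nhdsWithin).exists
  set X' : Fin m → Fin n → ℝ := fun i j => X i j + ε * D i j with hX'
  have hcol' : ∀ j, ∑ i, X' i j = 1 := by
    intro j
    simp only [hX', Finset.sum_add_distrib, hX.2 j, ← Finset.mul_sum, hcol j, mul_zero, add_zero]
  have hnn : ∀ i j, 0 ≤ X' i j := fun i j => hεA (i, j)
  have hfeas : Feasible X' := by
    refine ⟨fun i j => ⟨hnn i j, ?_⟩, hcol'⟩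
    calc X' i j ≤ ∑ i', X' i' j :=
          Finset.single_le_sum (fun i' _ => hnn i' j) (Finset.mem_univ i)
      _ = 1 := hcol' j
  have hload' : ∀ i, loadX P X' i < T := by
    intro i
    have : loadX P X' i = loadX P X i + ε * (∑ j, D i j * P i j) := by
      simp only [loadX, hX', add_mul, Finset.sum_add_distrib, Finset.mul_sum, mul_assoc]
    rw [this]; exact hεB i
  have hsup' : (⨆ i, loadX P X' i) < T := by
    have : Nonempty (Fin m) := ⟨⟨0, hm⟩⟩
    obtain ⟨i₁, hi₁⟩ := Finite.exists_max (loadX P X')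
    exact lt_of_le_of_lt (ciSup_le fun i => hi₁ i) (hload' i₁)
  exact lt_of_le_of_lt (MKS_le hm P hP X' hfeas) hsup'

theorem stmt15 {m n : ℕ} (hm : 0 < m) (P : Fin m → Fin n → ℝ)
    (hP : ∀ i j, 0 < P i j)
    (X : Fin m → Fin n → ℝ) (hX : Feasible X)
    (hopt : (⨆ i, loadX P X i) = MKS P)
    (k : ℕ) (hk : 1 ≤ k)
    (agents : Fin (k + 1) → Fin m) (hcycle : agents (Fin.last k) = agents 0)
    (items : Fin k → Fin n)
    (hpos : ∀ r : Fin k, 0 < X (agents r.castSucc) (items r)) :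
    1 ≤ ∏ r : Fin k, P (agents r.succ) (items r) / P (agents r.castSucc) (items r) := by
  classical
  by_contra hlt
  push_neg at hlt
  obtain ⟨K, rfl⟩ : ∃ K, k = K + 1 := ⟨k - 1, by omega⟩
  set A : Fin (K + 1) → Fin m := fun r => agents r.castSucc with hA
  set B : Fin (K + 1) → Fin m := fun r => agents r.succ with hB
  set ρ : Fin (K + 1) → ℝ := fun r => P (B r) (items r) / P (A r) (items r) with hρ
  have hρpos : ∀ r, 0 < ρ r := fun r => div_pos (hP _ _) (hP _ _)
  have hAB : ∀ r : Fin (K + 1), A (r + 1) = B r := by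
    intro r
    by_cases h : (r : ℕ) = K
    · have hr : r = Fin.last K := Fin.ext h
      subst hr
      have h1 : (Fin.last K + 1 : Fin (K + 1)) = 0 := by
        ext; simp [Fin.last, Fin.add_def]
      have h2 : (Fin.last K).succ = Fin.last (K + 1) := by
        ext; simp [Fin.last]
      simp only [hA, hB, h1, h2, Fin.castSucc_zero, hcycle]
    · have hv : ((r + 1 : Fin (K + 1)) : ℕ) = (r : ℕ) + 1 := by
        have := r.isLt
        simp [Fin.add_def, Nat.mod_eq_of_lt (by omega : (r:ℕ) + 1 < K + 1)]
      simp only [hA, hB]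
      congr 1
      ext
      simp [hv, Fin.val_succ]
  set Q : ℝ := ∏ r, ρ r with hQ
  have hQ1 : Q < 1 := hlt
  have hQ0 : 0 < Q := Finset.prod_pos fun r _ => hρpos r
  set γ : ℝ := (Q⁻¹ - 1) / (K + 1) with hγdef
  have hγ : 0 < γ := by
    have h1 : 1 < Q⁻¹ := (one_lt_inv₀ hQ0).2 hQ1
    have h2 : (0:ℝ) < (K:ℝ) + 1 := by positivity
    exact div_pos (by linarith) h2
  set u : Fin (K + 1) → ℝ := fun r =>
    (∏ s ∈ Finset.univ.filter (fun s : Fin (K+1) => (s : ℕ) < (r : ℕ)), ρ s)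
      * (1 + (r : ℕ) * γ) with hu
  have hupos : ∀ r, 0 < u r := by
    intro r
    have h1 : (0:ℝ) < ∏ s ∈ Finset.univ.filter (fun s : Fin (K+1) => (s : ℕ) < (r : ℕ)), ρ s :=
      Finset.prod_pos fun s _ => hρpos s
    have h2 : (0:ℝ) < 1 + (r : ℕ) * γ := by positivity
    exact mul_pos h1 h2
  have key1 : ∀ r, u r * ρ r < u (r + 1) := by
    intro r
    by_cases h : (r : ℕ) = K
    · -- wrap-around
      have hr : r = Fin.last K := Fin.ext h
      have h1 : (r + 1 : Fin (K + 1)) = 0 := by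
        subst hr; ext; simp [Fin.last, Fin.add_def]
      have hQsplit : (∏ s ∈ Finset.univ.filter (fun s : Fin (K+1) => (s : ℕ) < (r : ℕ)), ρ s) * ρ r = Q := by
        subst hr
        rw [hQ, ← Finset.prod_filter_mul_prod_filter_not Finset.univ
          (fun s : Fin (K+1) => (s : ℕ) < K)]
        congr 1
        have : Finset.univ.filter (fun s : Fin (K+1) => ¬ (s : ℕ) < K) = {Fin.last K} := by
          ext s
          simp [Fin.ext_iff, Fin.last]
          omega
        rw [this, Finset.prod_singleton]
      have hu0 : u (r + 1) = 1 := by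
        rw [h1, hu]
        simp
      rw [hu0, hu, mul_right_comm, hQsplit, h]
      -- Q * (1 + K * γ) < 1
      have hc : Q * Q⁻¹ = 1 := mul_inv_cancel₀ (ne_of_gt hQ0)
      have hKpos : (0:ℝ) < (K:ℝ) + 1 := by positivity
      rw [hγdef]
      rw [div_eq_iff (ne_of_gt hKpos)] at *
      nlinarith [hQ0, hQ1, hc, hKpos]
    · -- step case
      have hv : ((r + 1 : Fin (K + 1)) : ℕ) = (r : ℕ) + 1 := by
        have := r.isLt
        simp [Fin.add_def, Nat.mod_eq_of_lt (by omega : (r:ℕ) + 1 < K + 1)]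
      have hins : Finset.univ.filter (fun s : Fin (K+1) => (s : ℕ) < (r : ℕ) + 1)
          = insert r (Finset.univ.filter (fun s : Fin (K+1) => (s : ℕ) < (r : ℕ))) := by
        ext s
        simp [Fin.ext_iff]
        omega
      have hnotmem : r ∉ Finset.univ.filter (fun s : Fin (K+1) => (s : ℕ) < (r : ℕ)) := by
        simp
      have hprodpos : (0:ℝ) < ∏ s ∈ Finset.univ.filter (fun s : Fin (K+1) => (s : ℕ) < (r : ℕ)), ρ s :=
        Finset.prod_pos fun s _ => hρpos s
      rw [hu]
      simp only [hv, hins, Finset.prod_insert hnotmem]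
      push_cast
      have := hρpos r
      nlinarith [mul_pos hprodpos (hρpos r)]
  -- cycle load-change function
  set g1 : Fin m → ℝ := fun i => ∑ r, (if B r = i then u r * ρ r - u (r + 1) else 0) with hg1
  set a₀ : Fin m := A 0 with ha₀
  have hBlast : B (Fin.last K) = a₀ := by
    have h2 : (Fin.last K).succ = Fin.last (K + 1) := by ext; simp [Fin.last]
    simp only [hB, hA, h2, hcycle, ha₀, Fin.castSucc_zero]
  have hg1le : ∀ i, g1 i ≤ 0 := by
    intro i
    apply Finset.sum_nonpos
    intro r _
    by_cases h : B r = i <;> simp [h]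
    linarith [key1 r]
  have hg1neg : g1 a₀ < 0 := by
    have : g1 a₀ < ∑ r : Fin (K+1), (0:ℝ) := by
      apply Finset.sum_lt_sum
      · intro r _
        by_cases h : B r = a₀ <;> simp [h]
        linarith [key1 r]
      · refine ⟨Fin.last K, Finset.mem_univ _, ?_⟩
        have hlast0 : (Fin.last K + 1 : Fin (K+1)) = 0 := by
          ext; simp [Fin.last, Fin.add_def]
        have h := key1 (Fin.last K)
        rw [hlast0] at h
        simp [hBlast]
        linarith
    simpa using this
  -- choice of carried item
  have hc0 : ∀ i, 0 < loadX P X i → ∃ j, 0 < X i j := by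
    intro i hi
    by_contra hno
    push_neg at hno
    have : loadX P X i ≤ 0 := by
      apply Finset.sum_nonpos
      intro j _
      have h1 : X i j = 0 := le_antisymm (hno j) (hX.1 i j).1
      simp [h1]
    linarith
  set c : Fin m → Fin n := fun i => if h : ∃ j, 0 < X i j then h.choose else items 0 with hc
  have hcX : ∀ i, 0 < loadX P X i → 0 < X i (c i) := by
    intro i hi
    have h := hc0 i hi
    simp only [hc, dif_pos h]
    exact h.choose_spec
  have hloadpos : ∀ i j, 0 < X i j → 0 < loadX P X i := by
    intro i j hij
    have h1 : X i j * P i j ≤ loadX P X i := by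
      apply Finset.single_le_sum (f := fun j => X i j * P i j)
      · intro j' _
        exact mul_nonneg (hX.1 i j').1 (hP i j').le
      · exact Finset.mem_univ j
    nlinarith [hP i j]
  have hla₀ : 0 < loadX P X a₀ := hloadpos _ _ (hpos 0)
  have hlB : ∀ r, 0 < loadX P X (B r) := by
    intro r
    rw [← hAB r]
    exact hloadpos _ _ (hpos (r + 1))
  set v : Fin m → ℝ := fun i => if i = a₀ ∨ ¬ (0 < loadX P X i) then 0 else 1 with hv
  have hvnn : ∀ i, 0 ≤ v i := by
    intro i
    simp only [hv]
    split <;> norm_num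
  set S : ℝ := ∑ i', v i' * P a₀ (c i') with hS
  have hS0 : 0 ≤ S :=
    Finset.sum_nonneg fun i' _ => mul_nonneg (hvnn i') (hP _ _).le
  set η : ℝ := (-(g1 a₀)) / (2 * (S + 1)) with hη
  have hηpos : 0 < η := div_pos (by linarith) (by positivity)
  have hηS : g1 a₀ + η * S < 0 := by
    have h1 : η * S ≤ η * (S + 1) := by nlinarith
    have h2 : η * (S + 1) = -(g1 a₀) / 2 := by
      rw [hη]; field_simp
    nlinarith
  set D : Fin m → Fin n → ℝ := fun i j =>
    (∑ r, (u r / P (A r) (items r)) *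
      ((if B r = i ∧ items r = j then 1 else 0) - (if A r = i ∧ items r = j then 1 else 0)))
    + ((if i = a₀ then ∑ i', η * v i' * (if c i' = j then 1 else 0) else 0)
        - η * v i * (if c i = j then 1 else 0)) with hD
  have hcol : ∀ j, ∑ i, D i j = 0 := by
    intro j
    simp only [hD]
    rw [Finset.sum_add_distrib]
    have h1 : ∑ i, (∑ r, (u r / P (A r) (items r)) *
        ((if B r = i ∧ items r = j then (1:ℝ) else 0)
          - (if A r = i ∧ items r = j then 1 else 0))) = 0 := by
      rw [Finset.sum_comm]
      apply Finset.sum_eq_zero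
      intro r _
      rw [← Finset.mul_sum]
      have h2 : ∑ i, ((if B r = i ∧ items r = j then (1:ℝ) else 0)
          - (if A r = i ∧ items r = j then 1 else 0)) = 0 := by
        rw [Finset.sum_sub_distrib]
        simp [ite_and, Finset.sum_ite_eq]
      rw [h2, mul_zero]
    have h2 : ∑ i, ((if i = a₀ then ∑ i', η * v i' * (if c i' = j then (1:ℝ) else 0) else 0)
        - η * v i * (if c i = j then 1 else 0)) = 0 := by
      rw [Finset.sum_sub_distrib, Finset.sum_ite_eq' Finset.univ a₀
        (fun _ => ∑ i', η * v i' * (if c i' = j then (1:ℝ) else 0))]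
      simp
    rw [h1, h2, add_zero]
  have hpos0 : ∀ i j, X i j = 0 → 0 ≤ D i j := by
    intro i j hx
    simp only [hD]
    have h1 : (0:ℝ) ≤ ∑ r, (u r / P (A r) (items r)) *
        ((if B r = i ∧ items r = j then (1:ℝ) else 0)
          - (if A r = i ∧ items r = j then 1 else 0)) := by
      apply Finset.sum_nonneg
      intro r _
      have hA0 : (if A r = i ∧ items r = j then (1:ℝ) else 0) = 0 := by
        rw [if_neg]
        rintro ⟨e1, e2⟩
        have := hpos r
        rw [show agents r.castSucc = A r from rfl, e1, e2, hx] at this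
        exact lt_irrefl 0 this
      rw [hA0, sub_zero]
      apply mul_nonneg
      · exact div_nonneg (hupos r).le (hP _ _).le
      · split <;> norm_num
    have h2 : (0:ℝ) ≤ (if i = a₀ then ∑ i', η * v i' * (if c i' = j then (1:ℝ) else 0) else 0)
        - η * v i * (if c i = j then 1 else 0) := by
      have hneg : η * v i * (if c i = j then (1:ℝ) else 0) = 0 := by
        by_cases hvi : v i = 0
        · simp [hvi]
        · have hcond : ¬ (i = a₀ ∨ ¬ (0 < loadX P X i)) := by
            intro hco
            apply hvi
            simp only [hv, if_pos hco]
          push_neg at hcond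
          have hload : 0 < loadX P X i := hcond.2
          have hXc : 0 < X i (c i) := hcX i hload
          have hcj : ¬ c i = j := by
            intro e
            rw [e, hx] at hXc
            exact lt_irrefl 0 hXc
          simp [hcj]
      rw [hneg, sub_zero]
      split
      · exact Finset.sum_nonneg fun i' _ => mul_nonneg
          (mul_nonneg hηpos.le (hvnn i')) (by split <;> norm_num)
      · exact le_refl 0
    linarith
  have hgcomp : ∀ i, (∑ j, D i j * P i j)
      = g1 i + ((if i = a₀ then η * S else 0) - η * v i * P i (c i)) := by
    intro i
    simp only [hD, add_mul]
    rw [Finset.sum_add_distrib]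
    congr 1
    · -- cycle part
      simp only [Finset.sum_mul]
      rw [Finset.sum_comm]
      have hstep : ∀ r : Fin (K+1), (∑ j, (u r / P (A r) (items r)) *
          ((if B r = i ∧ items r = j then (1:ℝ) else 0)
            - (if A r = i ∧ items r = j then 1 else 0)) * P i j)
          = (if B r = i then u r * ρ r else 0) - (if A r = i then u r else 0) := by
        intro r
        have expand : ∀ j, (u r / P (A r) (items r)) *
            ((if B r = i ∧ items r = j then (1:ℝ) else 0)
              - (if A r = i ∧ items r = j then 1 else 0)) * P i j
            = (if B r = i then (if items r = j then (u r / P (A r) (items r)) * P i j else 0) else 0)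
              - (if A r = i then (if items r = j then (u r / P (A r) (items r)) * P i j else 0) else 0) := by
          intro j
          by_cases h1 : B r = i <;> by_cases h2 : A r = i <;> by_cases h3 : items r = j <;>
            simp [h1, h2, h3] <;> ring
        rw [Finset.sum_congr rfl (fun j _ => expand j), Finset.sum_sub_distrib]
        congr 1
        · by_cases h1 : B r = i
          · simp only [if_pos h1, Finset.sum_ite_eq, Finset.mem_univ, if_true]
            rw [← h1]
            simp only [hρ]
            rw [div_mul_eq_mul_div, mul_div_assoc]
          · simp [h1]
        · by_cases h2 : A r = i
          · simp only [if_pos h2, Finset.sum_ite_eq, Finset.mem_univ, if_true]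
            rw [← h2]
            exact div_mul_cancel₀ _ (ne_of_gt (hP _ _))
          · simp [h2]
      rw [Finset.sum_congr rfl (fun r _ => hstep r)]
      rw [Finset.sum_sub_distrib]
      have hre : (∑ r, (if A r = i then u r else 0))
          = ∑ r, (if B r = i then u (r + 1) else 0) := by
        rw [← Equiv.sum_comp (Equiv.addRight (1 : Fin (K+1)))
          (fun r => if A r = i then u r else 0)]
        apply Finset.sum_congr rfl
        intro r _
        have : (Equiv.addRight (1 : Fin (K+1))) r = r + 1 := rfl
        rw [this, hAB r]
      rw [hre, ← Finset.sum_sub_distrib, hg1]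
      apply Finset.sum_congr rfl
      intro r _
      by_cases h : B r = i <;> simp [h]
    · -- shed part
      simp only [sub_mul]
      rw [Finset.sum_sub_distrib]
      congr 1
      · by_cases h : i = a₀
        · simp only [h, if_true, eq_self_iff_true, if_pos]
          rw [hS, Finset.mul_sum]
          simp only [Finset.sum_mul]
          rw [Finset.sum_comm]
          apply Finset.sum_congr rfl
          intro i' _
          simp [ite_mul, mul_ite, Finset.sum_ite_eq, mul_assoc]
        · simp [h]
      · simp [ite_mul, mul_ite, Finset.sum_ite_eq]
  have hgd : ∀ i, (∑ j, D i j * P i j) < 0 ∨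
      ((∑ j, D i j * P i j) = 0 ∧ loadX P X i < ⨆ i', loadX P X i') := by
    intro i
    rw [hgcomp i]
    by_cases hl : 0 < loadX P X i
    · left
      by_cases hia : i = a₀
      · rw [hia]
        have hva : v a₀ = 0 := by
          rw [hv]; simp
        rw [if_pos rfl, hva]
        simpa using hηS
      · have hvi : v i = 1 := by
          rw [hv]
          simp only
          rw [if_neg]
          push_neg
          exact ⟨hia, hl⟩
        rw [if_neg hia, hvi]
        have := hg1le i
        have hPp := hP i (c i)
        nlinarith
    · right
      have hvi : v i = 0 := by
        rw [hv]; simp only; rw [if_pos (Or.inr hl)]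
      have hia : i ≠ a₀ := fun h => hl (h ▸ hla₀)
      have hg1z : g1 i = 0 := by
        rw [hg1]
        apply Finset.sum_eq_zero
        intro r _
        rw [if_neg]
        intro h
        exact hl (h ▸ hlB r)
      constructor
      · rw [hg1z, if_neg hia, hvi]
        ring
      · have h0 : loadX P X i ≤ 0 := not_lt.1 hl
        calc loadX P X i ≤ 0 := h0
          _ < loadX P X a₀ := hla₀
          _ ≤ ⨆ i', loadX P X i' := load_le_sup P X a₀
  have hM := master hm P hP X hX D hcol hpos0 hgd
  rw [hopt] at hM
  exact lt_irrefl _ hM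
end

section
/- Fix a weight matrix P ∈ ℝ_{>0}^{m×n} and let X be a feasible assignment attaining the optimal makespan, i.e., max_{i∈[m]} ℓ_i(P,X) = ℓ^MKS(P). Then there exists a ratio vector u ∈ ℝ_{>0}^m such that for all i ∈ [m] and j ∈ [n]: if x_{i,j} > 0, then p_{i,j}/u_i ≤ p_{k,j}/u_k for every k ∈ [m] (equivalently, if some k satisfies p_{k,j}/u_k < p_{i,j}/u_i, then x_{i,j} = 0). -/
/-!
Let `T` be the optimal makespan. The load vectors of feasible assignments form a convex set that
avoids the open orthant `{v | ∀ i, v i < T}`; separating the two gives weights `y` in the standard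
simplex with `T ≤ ∑ i, y i * ℓ_i(Y)` for every feasible `Y`, with equality at the optimal `X`.
So `X` minimises the linear cost `∑ i j, x_ij * (y_i * p_ij)`, and moving mass of an item to a
cheaper agent shows that such a minimiser only uses agents minimising `y_i * p_ij`. Giving every
item to an agent of weight `0` would cost `0 < T`, so `y > 0`, and `u = y⁻¹` works.
-/

open Finset

namespace StrongDual

variable {ι : Type*} (f : StrongDual ℝ (ι → ℝ)) {T u : ℝ}

theorem apply_eq_dotProduct [Fintype ι] [DecidableEq ι] (v : ι → ℝ) :
    f v = (fun i => f (Pi.single i 1)) ⬝ᵥ v := by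
  have h := LinearMap.pi_apply_eq_sum_univ (f : (ι → ℝ) →ₗ[ℝ] ℝ) v
  rw [ContinuousLinearMap.coe_coe] at h
  rw [h, dotProduct]
  refine sum_congr rfl fun i _ => ?_
  rw [smul_eq_mul, mul_comm]
  congr 2
  ext j
  simp [Pi.single_apply, eq_comm]

theorem apply_le_of_forall_apply_lt (hf : ∀ v : ι → ℝ, (∀ i, v i < T) → f v < u)
    {v : ι → ℝ} (hv : ∀ i, v i ≤ T) : f v ≤ u := by
  have h : closure (Set.univ.pi fun _ => Set.Iio T) ⊆ {v | f v ≤ u} :=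
    closure_minimal (fun v hv => (hf v fun i => hv i (Set.mem_univ i)).le)
      (isClosed_le f.continuous continuous_const)
  rw [closure_pi_set] at h
  exact h fun i _ => by simpa using hv i

theorem apply_single_nonneg [DecidableEq ι]
    (hf : ∀ v : ι → ℝ, (∀ i, v i ≤ T) → f v ≤ u) (i : ι) : 0 ≤ f (Pi.single i 1) := by
  by_contra! hi
  have hT : f (fun _ => T) ≤ u := hf _ fun _ => le_rfl
  -- push the `i`-th coordinate down far enough that `f` exceeds `u` by one
  set t := (u - f (fun _ => T) + 1) / -f (Pi.single i 1) with ht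
  have ht_nonneg : 0 ≤ t := div_nonneg (by linarith) (by linarith)
  have h := hf ((fun _ => T) - t • Pi.single i 1) fun k => by
    by_cases hk : k = i
    · subst hk
      simpa using ht_nonneg
    · simp [hk]
  rw [map_sub, map_smul, smul_eq_mul, ht, div_neg, neg_mul, div_mul_cancel₀ _ hi.ne] at h
  linarith

end StrongDual

theorem Convex.exists_mem_stdSimplex_forall_le_dotProduct {ι : Type*} [Fintype ι]
    {K : Set (ι → ℝ)} (hK : Convex ℝ K) (hKne : K.Nonempty) {T : ℝ}
    (hT : ∀ v ∈ K, ∃ i, T ≤ v i) :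
    ∃ y ∈ stdSimplex ℝ ι, ∀ v ∈ K, T ≤ y ⬝ᵥ v := by
  classical
  have hdisj : Disjoint (Set.univ.pi fun _ => Set.Iio T) K :=
    Set.disjoint_left.2 fun v hvS hvK => by
      obtain ⟨i, hi⟩ := hT v hvK
      exact (hi.trans_lt (hvS i (Set.mem_univ i))).false
  obtain ⟨f, u, hfS, hfK⟩ := geometric_hahn_banach_open
    (convex_pi fun _ _ => convex_Iio T) (isOpen_set_pi Set.finite_univ fun _ _ => isOpen_Iio)
    hK hdisj
  have hfT : ∀ v : ι → ℝ, (∀ i, v i ≤ T) → f v ≤ u := fun _ =>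
    f.apply_le_of_forall_apply_lt fun v hv => hfS v fun i _ => hv i
  set z : ι → ℝ := fun i => f (Pi.single i 1)
  have hfz : ∀ v, f v = z ⬝ᵥ v := f.apply_eq_dotProduct
  have hz : ∀ i, 0 ≤ z i := f.apply_single_nonneg hfT
  have hsum : 0 < ∑ i, z i := by
    by_contra! h
    have hz0 : z = 0 := funext fun i =>
      (sum_eq_zero_iff_of_nonneg fun i _ => hz i).1
        (le_antisymm h (sum_nonneg fun i _ => hz i)) i (mem_univ i)
    obtain ⟨v, hv⟩ := hKne
    have h1 := hfS (fun _ => T - 1) fun i _ => by simp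
    have h2 := hfK v hv
    rw [hfz, hz0, zero_dotProduct] at h1 h2
    linarith
  have hTu : T * ∑ i, z i ≤ u := by
    have h := hfT (fun _ => T) fun _ => le_rfl
    rwa [hfz, dotProduct, ← sum_mul, mul_comm] at h
  refine ⟨(∑ i, z i)⁻¹ • z, ⟨fun i => smul_nonneg (inv_nonneg.2 hsum.le) (hz i), ?_⟩,
    fun v hv => ?_⟩
  · simp [← mul_sum, hsum.ne']
  · rw [smul_dotProduct, ← hfz, smul_eq_mul, le_inv_mul_iff₀ hsum]
    linarith [hfK v hv]

variable {m n : ℕ}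

theorem Feasible.of_nonneg_of_sum_eq_one {X : Fin m → Fin n → ℝ} (h0 : ∀ i j, 0 ≤ X i j)
    (h1 : ∀ j, ∑ i, X i j = 1) : Feasible X :=
  ⟨fun i j => ⟨h0 i j, h1 j ▸ single_le_sum (fun k _ => h0 k j) (mem_univ i)⟩, h1⟩

theorem Feasible.exists_pos {X : Fin m → Fin n → ℝ} (hX : Feasible X) (j : Fin n) :
    ∃ i, 0 < X i j := by
  by_contra! h
  have := hX.2 j ▸ sum_nonpos fun i _ => h i
  norm_num at this

theorem convex_setOf_feasible : Convex ℝ {X : Fin m → Fin n → ℝ | Feasible X} := by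
  intro X hX Y hY a b ha hb hab
  refine Feasible.of_nonneg_of_sum_eq_one (fun i j => ?_) fun j => ?_
  · exact add_nonneg (mul_nonneg ha (hX.1 i j).1) (mul_nonneg hb (hY.1 i j).1)
  · simp [sum_add_distrib, ← mul_sum, hX.2 j, hY.2 j, hab]

theorem isLinearMap_loadX (P : Fin m → Fin n → ℝ) : IsLinearMap ℝ (loadX P) where
  map_add X Y := by ext i; simp [loadX, add_mul, sum_add_distrib]
  map_smul a X := by ext i; simp [loadX, mul_sum, mul_assoc]

theorem loadX_pos {P X : Fin m → Fin n → ℝ} (hP : ∀ i j, 0 < P i j) (hX : Feasible X)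
    {i : Fin m} {j : Fin n} (hij : 0 < X i j) : 0 < loadX P X i :=
  (mul_pos hij (hP i j)).trans_le <|
    single_le_sum (f := fun j => X i j * P i j)
      (fun j _ => mul_nonneg (hX.1 i j).1 (hP i j).le) (mem_univ j)

theorem MKS_le_iSup_loadX {P Y : Fin m → Fin n → ℝ} (hP : ∀ i j, 0 ≤ P i j)
    (hY : Feasible Y) : MKS P ≤ ⨆ i, loadX P Y i := by
  refine csInf_le ⟨0, ?_⟩ ⟨Y, hY, rfl⟩
  rintro _ ⟨Z, hZ, rfl⟩
  exact Real.iSup_nonneg fun i => sum_nonneg fun j _ => mul_nonneg (hZ.1 i j).1 (hP i j)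

theorem sum_loadX_mul_left (y : Fin m → ℝ) (P X : Fin m → Fin n → ℝ) :
    ∑ i, loadX (fun i j => y i * P i j) X i = y ⬝ᵥ loadX P X := by
  simp only [loadX, dotProduct, mul_sum]
  exact sum_congr rfl fun i _ => sum_congr rfl fun j _ => by ring

theorem le_of_isMinOn_sum_loadX {c X : Fin m → Fin n → ℝ}
    (hmin : IsMinOn (fun Y => ∑ i, loadX c Y i) {Y | Feasible Y} X) (hX : Feasible X)
    {i : Fin m} {j : Fin n} (hij : 0 < X i j) (k : Fin m) : c i j ≤ c k j := by
  by_contra! hlt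
  have hik : i ≠ k := by rintro rfl; exact lt_irrefl _ hlt
  -- move the whole share of item `j` from agent `i` to the cheaper agent `k`
  set Y := X + X i j • (Pi.single k (Pi.single j 1) - Pi.single i (Pi.single j 1))
  have hY : Feasible Y := by
    refine Feasible.of_nonneg_of_sum_eq_one (fun a b => ?_) fun b => ?_
    · by_cases hab : a = i ∧ b = j
      · obtain ⟨rfl, rfl⟩ := hab
        simp [Y, hik.symm]
      · have := (hX.1 a b).1
        simp only [Y, Pi.add_apply, Pi.smul_apply, Pi.sub_apply, Pi.single_apply, ite_apply,
          smul_eq_mul, Pi.zero_apply]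
        split_ifs <;> first | nlinarith | exact absurd ⟨‹_›, ‹_›⟩ hab
    · simp [Y, sum_add_distrib, hX.2 b, Pi.single_apply, ite_apply, ← mul_sum]
  have hcost : ∑ a, loadX c Y a = ∑ a, loadX c X a + (X i j * c k j - X i j * c i j) := by
    simp [Y, loadX, Pi.single_apply, ite_apply, add_mul, sum_add_distrib, sub_mul, mul_sub,
      mul_ite, ite_mul, sum_sub_distrib]
  have h := hmin (show Y ∈ {Y | Feasible Y} from hY)
  simp only [Set.mem_ofPred_eq, hcost] at h
  linarith [mul_lt_mul_of_pos_left hlt hij]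

theorem pos_of_forall_le_dotProduct_loadX {P : Fin m → Fin n → ℝ} {y : Fin m → ℝ}
    {T : ℝ} (hT : 0 < T) (hy : 0 ≤ y) (h : ∀ Y, Feasible Y → T ≤ y ⬝ᵥ loadX P Y)
    (i : Fin m) : 0 < y i := by
  refine (hy i).lt_of_ne' fun hyi => ?_
  let Y : Fin m → Fin n → ℝ := fun a _ => if a = i then 1 else 0
  have hY : Feasible Y :=
    Feasible.of_nonneg_of_sum_eq_one (fun a _ => by positivity) fun _ => by simp [Y]
  have hcost : y ⬝ᵥ loadX P Y = 0 := by simp [dotProduct, loadX, Y, hyi]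
  linarith [h Y hY]

theorem stmt16 {m n : ℕ} (hm : 0 < m) (P : Fin m → Fin n → ℝ)
    (hP : ∀ i j, 0 < P i j)
    (X : Fin m → Fin n → ℝ) (hX : Feasible X)
    (hopt : (⨆ i, loadX P X i) = MKS P) :
    ∃ u : Fin m → ℝ, (∀ i, 0 < u i) ∧
      ∀ i j, 0 < X i j → ∀ k, P i j / u i ≤ P k j / u k := by
  rcases isEmpty_or_nonempty (Fin n) with hn | ⟨⟨j₀⟩⟩
  · exact ⟨1, fun _ => one_pos, fun _ j => isEmptyElim j⟩
  have : Nonempty (Fin m) := ⟨⟨0, hm⟩⟩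
  set T := ⨆ i, loadX P X i
  have hXT : ∀ i, loadX P X i ≤ T := le_ciSup (Set.finite_range _).bddAbove
  have hT : ∀ Y, Feasible Y → ∃ i, T ≤ loadX P Y i := fun Y hY => by
    obtain ⟨i, hi⟩ := exists_eq_ciSup_of_finite (f := loadX P Y)
    exact ⟨i, hi ▸ hopt ▸ MKS_le_iSup_loadX (fun i j => (hP i j).le) hY⟩
  obtain ⟨y, ⟨hy0, hy1⟩, hyT⟩ := (convex_setOf_feasible.is_linear_image
    (isLinearMap_loadX P)).exists_mem_stdSimplex_forall_le_dotProduct ⟨_, X, hX, rfl⟩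
      (by rintro _ ⟨Y, hY, rfl⟩; exact hT Y hY)
  replace hyT : ∀ Y, Feasible Y → T ≤ y ⬝ᵥ loadX P Y := fun Y hY => hyT _ ⟨Y, hY, rfl⟩
  have hmin : IsMinOn (fun Y => ∑ i, loadX (fun i j => y i * P i j) Y i) {Y | Feasible Y} X :=
    fun Y hY => by
      simp only [Set.mem_ofPred_eq, sum_loadX_mul_left]
      calc y ⬝ᵥ loadX P X ≤ y ⬝ᵥ fun _ => T :=
            dotProduct_le_dotProduct_of_nonneg_left hXT hy0
        _ = T := by simp [dotProduct, ← sum_mul, hy1]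
        _ ≤ y ⬝ᵥ loadX P Y := hyT Y hY
  obtain ⟨a, ha⟩ := hX.exists_pos j₀
  have hy := pos_of_forall_le_dotProduct_loadX ((loadX_pos hP hX ha).trans_le (hXT a)) hy0 hyT
  refine ⟨fun i => (y i)⁻¹, fun i => inv_pos.2 (hy i), fun i j hij k => ?_⟩
  simpa only [div_inv_eq_mul, mul_comm] using le_of_isMinOn_sum_loadX hmin hX hij k
end
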